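/- arXiv:2507.11766 — 7 statements merged into one kernel-verified Lean document; each statement's English description precedes it below -/
import Mathlib

section
/- A linear map Λ from M_n(ℂ) to M_m(ℂ) is positivity-preserving (maps PSD matrices to PSD matrices) if and only if its Choi matrix C(Λ) is positive on product vectors, i.e. for all v ∈ ℂ^m and w ∈ ℂ^n, the vector u = v ⊗ w (with u_{(i,k)} = v_i · w_k) satisfies ⟨u, C(Λ) u⟩ ≥ 0. -/
/-!
The Choi quadratic form at a product vector `v ⊗ w` equals `⟨v, Λ(w̄ wᵀ) v⟩`. Every positive
semidefinite matrix is a sum of rank-one matrices `w̄ wᵀ`, so by linearity `Λ` preserves positivity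
iff each `Λ(w̄ wᵀ)` is positive semidefinite; over `ℂ` that is exactly nonnegativity of its
quadratic form, Hermitianity being automatic.
-/

open scoped Kronecker ComplexOrder

/-- The Choi matrix of a linear map `Λ : M_n(ℂ) → M_m(ℂ)`:
`C(Λ) = ∑ i j, Λ(E i j) ⊗ₖ E i j`, a matrix indexed by `Fin m × Fin n`. -/
noncomputable def choi {n m : ℕ}
    (Λ : Matrix (Fin n) (Fin n) ℂ →ₗ[ℂ] Matrix (Fin m) (Fin m) ℂ) :
    Matrix (Fin m × Fin n) (Fin m × Fin n) ℂ :=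
  ∑ i : Fin n, ∑ j : Fin n,
    (Λ (Matrix.single i j 1)) ⊗ₖ (Matrix.single i j 1)

/-- `Λ ⊗ id_N` : the unique linear map with `(Λ ⊗ id_N)(A ⊗ₖ B) = Λ(A) ⊗ₖ B`,
written out explicitly. -/
noncomputable def tensorId {n m : ℕ}
    (Λ : Matrix (Fin n) (Fin n) ℂ →ₗ[ℂ] Matrix (Fin m) (Fin m) ℂ) (N : ℕ)
    (M : Matrix (Fin n × Fin N) (Fin n × Fin N) ℂ) :
    Matrix (Fin m × Fin N) (Fin m × Fin N) ℂ :=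
  Matrix.of fun p q => Λ (Matrix.of fun i j => M (i, p.2) (j, q.2)) p.1 q.1

/-- `Λ` is `N`-positive: `Λ ⊗ id_N` maps PSD matrices to PSD matrices. -/
def NPos {n m : ℕ}
    (Λ : Matrix (Fin n) (Fin n) ℂ →ₗ[ℂ] Matrix (Fin m) (Fin m) ℂ) (N : ℕ) : Prop :=
  ∀ M : Matrix (Fin n × Fin N) (Fin n × Fin N) ℂ,
    M.PosSemidef → (tensorId Λ N M).PosSemidef

/-- `Λ` is completely positive: `N`-positive for every `N ≥ 1`. -/
def CP {n m : ℕ}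
    (Λ : Matrix (Fin n) (Fin n) ℂ →ₗ[ℂ] Matrix (Fin m) (Fin m) ℂ) : Prop :=
  ∀ N : ℕ, 1 ≤ N → NPos Λ N

open Matrix

namespace Matrix

variable {R l m n k : Type*} [CommSemiring R] [Fintype m] [Fintype n]

theorem kronecker_mulVec_prod (B : Matrix l m R) (C : Matrix k n R) (v : m → R) (w : n → R) :
    (B ⊗ₖ C) *ᵥ (fun p => v p.1 * w p.2) = fun p => (B *ᵥ v) p.1 * (C *ᵥ w) p.2 := by
  ext ⟨i, j⟩
  simp only [mulVec, dotProduct, Fintype.sum_prod_type, kroneckerMap_apply, Finset.sum_mul_sum]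
  exact Finset.sum_congr rfl fun _ _ => Finset.sum_congr rfl fun _ _ => by ring

theorem dotProduct_prod (a c : m → R) (b d : n → R) :
    (fun p : m × n => a p.1 * b p.2) ⬝ᵥ (fun p => c p.1 * d p.2) = (a ⬝ᵥ c) * (b ⬝ᵥ d) := by
  simp only [dotProduct, Fintype.sum_prod_type, Finset.sum_mul_sum]
  exact Finset.sum_congr rfl fun _ _ => Finset.sum_congr rfl fun _ _ => by ring

theorem star_dotProduct_kronecker_mulVec_prod [StarRing R] (B : Matrix m m R) (C : Matrix n n R)
    (v : m → R) (w : n → R) :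
    star (fun p => v p.1 * w p.2) ⬝ᵥ ((B ⊗ₖ C) *ᵥ fun p => v p.1 * w p.2) =
      (star v ⬝ᵥ B *ᵥ v) * (star w ⬝ᵥ C *ᵥ w) := by
  have hstar : star (fun p : m × n => v p.1 * w p.2) = fun p => star v p.1 * star w p.2 := by
    ext p
    simp
  rw [hstar, kronecker_mulVec_prod, dotProduct_prod]

end Matrix

theorem Matrix.posSemidef_iff_complex {ι : Type*} [Fintype ι] {A : Matrix ι ι ℂ} :
    A.PosSemidef ↔ ∀ x : ι → ℂ, 0 ≤ star x ⬝ᵥ (A *ᵥ x) := by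
  classical
  refine ⟨fun h => h.dotProduct_mulVec_nonneg, fun h => ?_⟩
  rw [← isPositive_toEuclideanLin_iff, LinearMap.isPositive_iff_complex]
  intro x
  have hx := h x
  have hreal := (IsSelfAdjoint.of_nonneg hx).star_eq
  have hinner : x.ofLp ⬝ᵥ star (A *ᵥ x.ofLp) = star x.ofLp ⬝ᵥ A *ᵥ x.ofLp := by
    rw [dotProduct_star, dotProduct_comm, hreal]
  simp only [toLpLin_apply, EuclideanSpace.inner_eq_star_dotProduct, hinner]
  exact ⟨Complex.conj_eq_iff_re.mp hreal, (Complex.nonneg_iff.mp hx).1⟩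

theorem LinearMap.map_posSemidef_iff_map_vecMulVec {𝕜 ι κ : Type*} [RCLike 𝕜] [Finite ι]
    (Λ : Matrix ι ι 𝕜 →ₗ[𝕜] Matrix κ κ 𝕜) :
    (∀ A, A.PosSemidef → (Λ A).PosSemidef) ↔
      ∀ w : ι → 𝕜, (Λ (vecMulVec (star w) w)).PosSemidef := by
  refine ⟨fun h w => h _ (posSemidef_vecMulVec_star_self w), fun h A hA => ?_⟩
  obtain ⟨k, u, rfl⟩ := posSemidef_iff_eq_sum_vecMulVec.mp hA
  rw [map_sum]
  exact posSemidef_sum _ fun i _ => by simpa using h (star (u i))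

theorem star_dotProduct_choi_mulVec_prod {n m : ℕ}
    (Λ : Matrix (Fin n) (Fin n) ℂ →ₗ[ℂ] Matrix (Fin m) (Fin m) ℂ) (v : Fin m → ℂ)
    (w : Fin n → ℂ) :
    star (fun p : Fin m × Fin n => v p.1 * w p.2) ⬝ᵥ (choi Λ *ᵥ fun p => v p.1 * w p.2) =
      star v ⬝ᵥ (Λ (vecMulVec (star w) w) *ᵥ v) := by
  have hw : vecMulVec (star w) w = ∑ i, ∑ j, (star (w i) * w j) • single i j (1 : ℂ) := by
    conv_lhs => rw [matrix_eq_sum_single (vecMulVec (star w) w)]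
    simp [smul_single, vecMulVec_apply]
  have hsingle (i j : Fin n) : star w ⬝ᵥ (single i j 1 *ᵥ w) = star (w i) * w j := by
    rw [single_mulVec, one_mul]
    exact dotProduct_single _ _ _
  simp only [choi, sum_mulVec, dotProduct_sum, star_dotProduct_kronecker_mulVec_prod, hsingle, hw,
    map_sum, map_smul, smul_mulVec, dotProduct_smul, smul_eq_mul, mul_comm]

/-- `Λ` is positivity-preserving iff its Choi matrix is positive on
product vectors `u = v ⊗ w`. -/
theorem pos_preserving_iff_choi_pos_on_product_vectors {n m : ℕ}
    (Λ : Matrix (Fin n) (Fin n) ℂ →ₗ[ℂ] Matrix (Fin m) (Fin m) ℂ) :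
    (∀ A : Matrix (Fin n) (Fin n) ℂ, A.PosSemidef → (Λ A).PosSemidef) ↔
      (∀ (v : Fin m → ℂ) (w : Fin n → ℂ),
        0 ≤ dotProduct (star fun p : Fin m × Fin n => v p.1 * w p.2)
            ((choi Λ).mulVec fun p : Fin m × Fin n => v p.1 * w p.2)) := by
  rw [LinearMap.map_posSemidef_iff_map_vecMulVec, forall_comm]
  refine forall_congr' fun w => ?_
  simp only [posSemidef_iff_complex, star_dotProduct_choi_mulVec_prod]
end

section
/- For every N ≥ 1, a linear map Λ from M_n(ℂ) to M_m(ℂ) is N-positive if and only if its Choi matrix C(Λ) is positive on vectors of Schmidt rank at most N, i.e. ⟨u, C(Λ) u⟩ ≥ 0 for every vector u indexed by Fin m × Fin n such that the m × n matrix (M_u)_{i,k} := u_{(i,k)} has rank at most N. -/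
open scoped Kronecker ComplexOrder

/-!
`vec Aᵀ` is the vector `(i, k) ↦ A i k`; the reshaping in the theorem inverts it, so a
vector of Schmidt rank at most `N` is `vec (X * Y)ᵀ` with `X` of width `N`. Since `C(Λ)` is
`(Λ ⊗ id_n)` applied to `ω ω*` with `ω = vec 1`, a direct computation gives
`⟨vec (X * Y)ᵀ, C(Λ) vec (X * Y)ᵀ⟩ = ⟨vec Xᵀ, (Λ ⊗ id_N)(v v*) vec Xᵀ⟩` with `v = vec Yᴴᵀ`.
Every PSD matrix is a sum of such `v v*`, so `N`-positivity and positivity of `C(Λ)` on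
Schmidt rank `≤ N` are both the nonnegativity of these quantities.
-/

open Matrix Function

theorem Matrix.exists_mul_eq_of_rank_le {m n K : Type*} [Fintype n] [DecidableEq n] [Field K]
    {N : ℕ} (A : Matrix m n K) (h : A.rank ≤ N) :
    ∃ (X : Matrix m (Fin N) K) (Y : Matrix (Fin N) n K), A = X * Y := by
  set W := LinearMap.range A.mulVecLin
  let S : (Fin N → K) →ₗ[K] W :=
    (Module.finBasis K W).equivFun.symm.toLinearMap ∘ₗ LinearMap.funLeft K K (Fin.castLE h)
  have hS : Surjective S := by
    simp only [S, LinearMap.coe_comp, LinearEquiv.coe_coe]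
    exact (LinearEquiv.surjective _).comp
      (LinearMap.funLeft_surjective_of_injective _ _ _ (Fin.castLE_injective h))
  obtain ⟨Q, hQ⟩ := Module.projective_lifting_property S A.mulVecLin.rangeRestrict hS
  refine ⟨LinearMap.toMatrix' (W.subtype ∘ₗ S), LinearMap.toMatrix' Q, ?_⟩
  rw [← LinearMap.toMatrix'_comp, LinearMap.comp_assoc, hQ, LinearMap.rangeRestrict,
    LinearMap.subtype_comp_codRestrict]
  exact (LinearMap.toMatrix'_toLin' A).symm

theorem Matrix.posSemidef_of_forall_dotProduct_mulVec_nonneg {ι : Type*} [Fintype ι]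
    [DecidableEq ι] {A : Matrix ι ι ℂ} (h : ∀ x, 0 ≤ star x ⬝ᵥ (A *ᵥ x)) : A.PosSemidef := by
  rw [← isPositive_toEuclideanLin_iff, LinearMap.isPositive_iff_complex]
  intro x
  have hx := h x.ofLp
  rw [EuclideanSpace.inner_eq_star_dotProduct, ofLp_toLpLin, toLin'_apply, dotProduct_star,
    dotProduct_comm, (IsSelfAdjoint.of_nonneg hx).star_eq]
  obtain ⟨hre, him⟩ := Complex.nonneg_iff.mp hx
  exact ⟨Complex.ext (by simp) (by simp [him]), hre⟩

section

variable {n m : ℕ} (Λ : Matrix (Fin n) (Fin n) ℂ →ₗ[ℂ] Matrix (Fin m) (Fin m) ℂ)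

theorem tensorId_sum {N : ℕ} {ι : Type*} (s : Finset ι)
    (M : ι → Matrix (Fin n × Fin N) (Fin n × Fin N) ℂ) :
    tensorId Λ N (∑ c ∈ s, M c) = ∑ c ∈ s, tensorId Λ N (M c) := by
  ext p q
  have hblock : (of fun i j => ∑ c ∈ s, M c (i, p.2) (j, q.2)) =
      ∑ c ∈ s, of fun i j => M c (i, p.2) (j, q.2) := by
    ext; simp [Matrix.sum_apply]
  simp only [tensorId, of_apply, Matrix.sum_apply]
  rw [hblock, map_sum, Matrix.sum_apply]

theorem choi_apply (i : Fin m) (k : Fin n) (j : Fin m) (l : Fin n) :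
    choi Λ (i, k) (j, l) = Λ (single k l 1) i j := by
  simp [choi, Matrix.sum_apply, single, ite_and]

theorem choi_eq_tensorId :
    choi Λ = tensorId Λ n (vecMulVec (vec 1) (star (vec 1))) := by
  ext ⟨i, k⟩ ⟨j, l⟩
  rw [choi_apply]
  refine congrArg (fun A => Λ A i j) (ext fun a b => ?_)
  simp [single, vecMulVec, one_apply, ← ite_and, and_comm, eq_comm]

theorem dotProduct_tensorId_vecMulVec_mulVec {N : ℕ} (X : Matrix (Fin m) (Fin N) ℂ)
    (V : Matrix (Fin n) (Fin N) ℂ) :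
    star (vec Xᵀ) ⬝ᵥ (tensorId Λ N (vecMulVec (vec Vᵀ) (star (vec Vᵀ))) *ᵥ vec Xᵀ) =
      ∑ i, ∑ j, Λ (vecMulVec (star ((X * Vᴴ) i)) ((X * Vᴴ) j)) i j := by
  have hsplit : ∀ i j, vecMulVec (star ((X * Vᴴ) i)) ((X * Vᴴ) j) =
      ∑ a, ∑ b, (star (X i a) * X j b) • of fun k l => V k a * star (V l b) := by
    intro i j; ext k l
    simp only [vecMulVec_apply, Pi.star_apply, mul_apply, conjTranspose_apply, star_sum,
      star_mul', star_star, Finset.sum_mul, Finset.mul_sum, Matrix.sum_apply, Matrix.smul_apply,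
      of_apply, smul_eq_mul]
    rw [Finset.sum_comm]
    exact Finset.sum_congr rfl fun _ _ => Finset.sum_congr rfl fun _ _ => by ring
  simp only [hsplit, map_sum, map_smul, Matrix.sum_apply, Matrix.smul_apply, smul_eq_mul,
    dotProduct, mulVec, tensorId, of_apply, vecMulVec_apply, vec, transpose_apply, Pi.star_apply,
    Fintype.sum_prod_type, Finset.mul_sum]
  refine Finset.sum_congr rfl fun i _ => ?_
  rw [Finset.sum_comm]
  exact Finset.sum_congr rfl fun _ _ => Finset.sum_congr rfl fun _ _ =>
    Finset.sum_congr rfl fun _ _ => by ring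

theorem dotProduct_choi_mulVec_vec_mul {N : ℕ} (X : Matrix (Fin m) (Fin N) ℂ)
    (Y : Matrix (Fin N) (Fin n) ℂ) :
    star (vec (X * Y)ᵀ) ⬝ᵥ (choi Λ *ᵥ vec (X * Y)ᵀ) =
      star (vec Xᵀ) ⬝ᵥ (tensorId Λ N (vecMulVec (vec Yᴴᵀ) (star (vec Yᴴᵀ))) *ᵥ vec Xᵀ) := by
  rw [choi_eq_tensorId, ← transpose_one, dotProduct_tensorId_vecMulVec_mulVec,
    dotProduct_tensorId_vecMulVec_mulVec]
  simp only [conjTranspose_one, Matrix.mul_one, conjTranspose_conjTranspose]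

end

/-- for every `N ≥ 1`, `Λ` is `N`-positive iff its Choi matrix is positive on
vectors of Schmidt rank at most `N`. -/
theorem NPos_iff_choi_pos_on_schmidt_rank_le {n m : ℕ}
    (Λ : Matrix (Fin n) (Fin n) ℂ →ₗ[ℂ] Matrix (Fin m) (Fin m) ℂ) :
    ∀ N : ℕ, 1 ≤ N →
      (NPos Λ N ↔
        ∀ u : Fin m × Fin n → ℂ,
          (Matrix.of fun (i : Fin m) (k : Fin n) => u (i, k)).rank ≤ N →
          0 ≤ dotProduct (star u) ((choi Λ).mulVec u)) := by
  intro N _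
  constructor
  · intro hΛ u hu
    obtain ⟨X, Y, hXY⟩ := exists_mul_eq_of_rank_le _ hu
    have hu : u = vec (X * Y)ᵀ := by rw [← hXY]; rfl
    rw [hu, dotProduct_choi_mulVec_vec_mul]
    exact (hΛ _ (posSemidef_vecMulVec_self_star _)).dotProduct_mulVec_nonneg _
  · intro hC M hM
    obtain ⟨r, v, rfl⟩ := posSemidef_iff_eq_sum_vecMulVec.mp hM
    rw [tensorId_sum]
    refine posSemidef_sum _ fun c _ => posSemidef_of_forall_dotProduct_mulVec_nonneg fun x => ?_
    let X : Matrix (Fin m) (Fin N) ℂ := of fun i a => x (i, a)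
    let V : Matrix (Fin n) (Fin N) ℂ := of fun k a => v c (k, a)
    have key := dotProduct_choi_mulVec_vec_mul Λ X Vᴴ
    rw [conjTranspose_conjTranspose] at key
    change _ = star x ⬝ᵥ (tensorId Λ N (vecMulVec (v c) (star (v c))) *ᵥ x) at key
    rw [← key]
    refine hC _ ?_
    change (X * Vᴴ).rank ≤ N
    exact (rank_mul_le_left _ _).trans (rank_le_width _)
end

section
/- Choi–Kraus theorem: a linear map Λ from M_n(ℂ) to M_m(ℂ) is completely positive if and only if there exist matrices A_1, …, A_{n·m} (each of size m × n, i.e. in Matrix (Fin m) (Fin n) ℂ) such that Λ(X) = Σ_{k=1}^{n·m} A_k X A_kᴴ for all X ∈ M_n(ℂ). -/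
open scoped Kronecker ComplexOrder Matrix

/-!
Feeding the maximally entangled matrix `∑ i j, E i j ⊗ₖ E i j` to `Λ ⊗ id_n` yields the Choi
matrix, so complete positivity makes it positive semidefinite, i.e. a Gram matrix `Bᴴ * B` with
`m * n` rows. The Choi matrix determines `Λ`, and the rows of `B`, conjugated and reshaped into
`m × n` matrices, are Kraus operators whose map has that same Choi matrix. Conversely, for a
Kraus map `Λ ⊗ id_N` is `M ↦ ∑ k, (A k ⊗ₖ 1) * M * (A k ⊗ₖ 1)ᴴ`, which preserves positivity.
-/

open Matrix

section KrausMap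

variable {ι m n R : Type*} [Fintype ι] [Fintype n] [CommSemiring R] [StarRing R]

def krausMap (K : ι → Matrix m n R) : Matrix n n R →ₗ[R] Matrix m m R where
  toFun X := ∑ i, K i * X * (K i)ᴴ
  map_add' X Y := by simp only [Matrix.mul_add, Matrix.add_mul, Finset.sum_add_distrib]
  map_smul' c X := by
    simp only [Matrix.mul_smul, Matrix.smul_mul, Finset.smul_sum, RingHom.id_apply]

@[simp]
lemma krausMap_apply (K : ι → Matrix m n R) (X : Matrix n n R) :
    krausMap K X = ∑ i, K i * X * (K i)ᴴ :=
  rfl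

lemma krausMap_comp_equiv {κ : Type*} [Fintype κ] (e : κ ≃ ι) (K : ι → Matrix m n R) :
    krausMap (K ∘ e) = krausMap K :=
  LinearMap.ext fun X => e.sum_comp fun i => K i * X * (K i)ᴴ

end KrausMap

lemma Matrix.mul_single_one_mul_apply {l m n R : Type*} [Fintype m] [Fintype n] [DecidableEq m]
    [DecidableEq n] [NonAssocSemiring R] (A : Matrix l m R) (B : Matrix n l R) (b : m) (d : n)
    (a c : l) : (A * single b d (1 : R) * B) a c = A a b * B d c := by
  simp [mul_apply, single, ite_and]

section Choi

variable {ι : Type*} [Fintype ι] {n m : ℕ}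

@[simp]
lemma choi_apply_s5 (Λ : Matrix (Fin n) (Fin n) ℂ →ₗ[ℂ] Matrix (Fin m) (Fin m) ℂ)
    (a c : Fin m) (b d : Fin n) :
    choi Λ (a, b) (c, d) = Λ (single b d 1) a c := by
  simp [choi, Matrix.sum_apply, single, ite_and]

lemma choi_injective : Function.Injective (choi (n := n) (m := m)) := by
  intro Λ Λ' h
  refine ext_linearMap ℂ fun b d => LinearMap.ext_ring ?_
  ext a c
  simpa using congrFun₂ h (a, b) (c, d)

lemma choi_krausMap_of_rows (B : Matrix ι (Fin m × Fin n) ℂ) :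
    choi (krausMap fun i => of fun a b => star (B i (a, b))) = Bᴴ * B := by
  ext ⟨a, b⟩ ⟨c, d⟩
  simp only [choi_apply_s5, krausMap_apply, Matrix.sum_apply, mul_single_one_mul_apply]
  simp [mul_apply]

lemma exists_krausMap_eq_of_choi_posSemidef
    {Λ : Matrix (Fin n) (Fin n) ℂ →ₗ[ℂ] Matrix (Fin m) (Fin m) ℂ} (hΛ : (choi Λ).PosSemidef) :
    ∃ K : Fin m × Fin n → Matrix (Fin m) (Fin n) ℂ, Λ = krausMap K := by
  open scoped MatrixOrder in
  obtain ⟨B, hB⟩ := CStarAlgebra.nonneg_iff_eq_star_mul_self.mp hΛ.nonneg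
  exact ⟨_, choi_injective (hB.trans (choi_krausMap_of_rows B).symm)⟩

noncomputable def maxEntangled (n : ℕ) : Matrix (Fin n × Fin n) (Fin n × Fin n) ℂ :=
  vecMulVec (vec 1) (star (vec 1))

lemma maxEntangled_posSemidef (n : ℕ) : (maxEntangled n).PosSemidef :=
  posSemidef_vecMulVec_self_star _

lemma tensorId_maxEntangled (Λ : Matrix (Fin n) (Fin n) ℂ →ₗ[ℂ] Matrix (Fin m) (Fin m) ℂ) :
    tensorId Λ n (maxEntangled n) = choi Λ := by
  ext ⟨a, b⟩ ⟨c, d⟩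
  have h : (of fun i j => maxEntangled n (i, b) (j, d)) = single b d 1 := by
    ext i j
    simp only [maxEntangled, vecMulVec_apply, vec, one_apply, single, of_apply, Pi.star_apply]
    split_ifs <;> simp_all
  rw [choi_apply_s5, tensorId, of_apply, h]

lemma CP.choi_posSemidef {Λ : Matrix (Fin n) (Fin n) ℂ →ₗ[ℂ] Matrix (Fin m) (Fin m) ℂ}
    (hΛ : CP Λ) : (choi Λ).PosSemidef := by
  rcases n.eq_zero_or_pos with rfl | hn
  · exact Subsingleton.elim (choi Λ) 0 ▸ PosSemidef.zero
  · simpa [tensorId_maxEntangled] using hΛ n hn _ (maxEntangled_posSemidef n)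

lemma tensorId_krausMap (K : ι → Matrix (Fin m) (Fin n) ℂ) (N : ℕ)
    (M : Matrix (Fin n × Fin N) (Fin n × Fin N) ℂ) :
    tensorId (krausMap K) N M = ∑ i, (K i ⊗ₖ (1 : Matrix (Fin N) (Fin N) ℂ)) * M *
        (K i ⊗ₖ (1 : Matrix (Fin N) (Fin N) ℂ))ᴴ := by
  ext ⟨a, p⟩ ⟨c, q⟩
  simp [tensorId, Matrix.sum_apply, mul_apply, Fintype.sum_prod_type, one_apply,
    apply_ite (starRingEnd ℂ)]

lemma cp_krausMap (K : ι → Matrix (Fin m) (Fin n) ℂ) :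
    CP (krausMap K) := fun N _ M hM => by
  rw [tensorId_krausMap]
  exact posSemidef_sum _ fun _ _ => hM.mul_mul_conjTranspose_same _

end Choi

/-- Choi–Kraus: `Λ` is completely positive iff it has a Kraus presentation
`Λ(X) = ∑_{k=1}^{n·m} A_k X A_kᴴ` with `A_k ∈ Matrix (Fin m) (Fin n) ℂ`. -/
theorem cp_iff_kraus {n m : ℕ}
    (Λ : Matrix (Fin n) (Fin n) ℂ →ₗ[ℂ] Matrix (Fin m) (Fin m) ℂ) :
    CP Λ ↔ ∃ A : Fin (n * m) → Matrix (Fin m) (Fin n) ℂ,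
      ∀ X : Matrix (Fin n) (Fin n) ℂ, Λ X = ∑ k : Fin (n * m), A k * X * (A k)ᴴ := by
  constructor
  · intro hΛ
    obtain ⟨K, rfl⟩ := exists_krausMap_eq_of_choi_posSemidef hΛ.choi_posSemidef
    let e : Fin (n * m) ≃ Fin m × Fin n := (finCongr (Nat.mul_comm n m)).trans finProdFinEquiv.symm
    exact ⟨K ∘ e, fun X => by rw [← krausMap_comp_equiv e K, krausMap_apply]⟩
  · rintro ⟨A, hA⟩
    obtain rfl : Λ = krausMap A := LinearMap.ext hA
    exact cp_krausMap A
end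

section
/- Trace-preserving criterion: let Ψ be a completely positive linear map from M_n(ℂ) to itself, G, H ∈ M_n(ℂ) Hermitian, and ℒ = L(Ψ,G,H). Then tr(exp(tℒ)(ρ)) = tr(ρ) for every t ≥ 0 and every ρ ∈ M_n(ℂ) if and only if Ψ*(I) = 2G, where I is the identity matrix. -/
open scoped Kronecker ComplexOrder Matrix

attribute [local instance] Matrix.normedAddCommGroup Matrix.normedSpace

/-- Porting aid: the topological-ring structure of the normed ring `M_n(ℂ) →L[ℂ] M_n(ℂ)`,
which instance search no longer finds by itself through the local matrix norm. -/
instance instIsTopologicalRingMatrixCLM {n : ℕ} :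
    IsTopologicalRing (Matrix (Fin n) (Fin n) ℂ →L[ℂ] Matrix (Fin n) (Fin n) ℂ) := by
  letI : NormedRing (Matrix (Fin n) (Fin n) ℂ →L[ℂ] Matrix (Fin n) (Fin n) ℂ) :=
    ContinuousLinearMap.toNormedRing
  exact NonUnitalSeminormedRing.toIsTopologicalRing

/-! The function `t ↦ tr (exp (tℒ) ρ)` has derivative `tr (ℒ (exp (tℒ) ρ))`, so the semigroup
preserves the trace for `t ≥ 0` iff `tr ∘ ℒ = 0`. By cyclicity of the trace the commutator with `H`
drops out and `tr (ℒ σ) = tr ((Ψ*(I)ᴴ - 2G) σ)`, which vanishes for all `σ` iff `Ψ*(I)ᴴ = 2G`,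
i.e. iff `Ψ*(I) = 2G` since `G` is Hermitian. -/

open NormedSpace

section ExpSemigroup

variable {E : Type*} [NormedAddCommGroup E] [NormedSpace ℂ E] [CompleteSpace E]
  (A : E →L[ℂ] E) (φ : E →L[ℂ] ℂ)

theorem hasDerivAt_apply_exp_ofReal_smul (x : E) (t : ℝ) :
    HasDerivAt (fun s : ℝ => φ (exp ((s : ℂ) • A) x)) (φ (A (exp ((t : ℂ) • A) x))) t := by
  have hexp : HasDerivAt (fun u : ℂ => exp (u • A)) (A * exp ((t : ℂ) • A)) t :=
    hasDerivAt_exp_smul_const' A (t : ℂ)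
  exact ((φ.comp (ContinuousLinearMap.apply ℂ E x)).hasFDerivAt.comp_hasDerivAt _ hexp).comp_ofReal

theorem apply_exp_ofReal_smul_eq_iff_apply_eq_zero :
    (∀ t : ℝ, 0 ≤ t → ∀ x, φ (exp ((t : ℂ) • A) x) = φ x) ↔ ∀ x, φ (A x) = 0 := by
  constructor
  · intro hconst x
    have hderiv := (hasDerivAt_apply_exp_ofReal_smul A φ x 0).hasDerivWithinAt (s := Set.Ici 0)
    have hderiv₀ : HasDerivWithinAt (fun s : ℝ => φ (exp ((s : ℂ) • A) x)) 0 (Set.Ici 0) 0 :=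
      (hasDerivWithinAt_const _ _ (φ x)).congr (fun s hs => hconst s hs x) (hconst 0 le_rfl x)
    simpa using (uniqueDiffOn_Ici 0 0 Set.self_mem_Ici).eq_deriv _ hderiv hderiv₀
  · intro hzero t _ x
    have hderiv (s : ℝ) : HasDerivAt (fun s : ℝ => φ (exp ((s : ℂ) • A) x)) 0 s := by
      simpa only [hzero] using hasDerivAt_apply_exp_ofReal_smul A φ x s
    simpa using is_const_of_deriv_eq_zero (fun s => (hderiv s).differentiableAt)
      (fun s => (hderiv s).deriv) t 0

end ExpSemigroup

namespace Matrix

variable {m n R : Type*} [Fintype m] [Fintype n]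

theorem trace_lindblad_eq_trace_mul [CommRing R] (Ψ : Matrix m m R → Matrix m m R)
    (K G H ρ : Matrix m m R) (c : R) (hΨ : ∀ σ, (Ψ σ).trace = (K * σ).trace) :
    (Ψ ρ - (G * ρ + ρ * G) - c • (H * ρ - ρ * H)).trace = ((K - (2 : R) • G) * ρ).trace := by
  simp only [trace_sub, trace_add, trace_smul, sub_mul, smul_mul, hΨ, trace_mul_comm ρ]
  ring

theorem forall_trace_mul_eq_zero_iff [DecidableEq m] [NonAssocSemiring R] {A : Matrix m n R} :
    (∀ σ : Matrix n m R, (A * σ).trace = 0) ↔ A = 0 := by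
  simp [ext_iff_trace_mul_right (B := 0)]

end Matrix

theorem trace_preserving_criterion_general {n : ℕ}
    (Ψ : Matrix (Fin n) (Fin n) ℂ →ₗ[ℂ] Matrix (Fin n) (Fin n) ℂ)
    (G H : Matrix (Fin n) (Fin n) ℂ) (hG : G.IsHermitian)
    (Ψadj : Matrix (Fin n) (Fin n) ℂ →ₗ[ℂ] Matrix (Fin n) (Fin n) ℂ)
    (hadj : ∀ B ρ : Matrix (Fin n) (Fin n) ℂ,
      (Bᴴ * Ψ ρ).trace = ((Ψadj B)ᴴ * ρ).trace)
    (ℒ : Matrix (Fin n) (Fin n) ℂ →L[ℂ] Matrix (Fin n) (Fin n) ℂ)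
    (hℒ : ∀ ρ : Matrix (Fin n) (Fin n) ℂ,
      ℒ ρ = Ψ ρ - (G * ρ + ρ * G) - Complex.I • (H * ρ - ρ * H)) :
    (∀ t : ℝ, 0 ≤ t → ∀ ρ : Matrix (Fin n) (Fin n) ℂ,
        (NormedSpace.exp ((t : ℂ) • ℒ) ρ).trace = ρ.trace) ↔
      Ψadj 1 = (2 : ℂ) • G := by
  have hΨ (σ : Matrix (Fin n) (Fin n) ℂ) : (Ψ σ).trace = ((Ψadj 1)ᴴ * σ).trace := by
    simpa using hadj 1 σ
  have htrace : (∀ t : ℝ, 0 ≤ t → ∀ ρ : Matrix (Fin n) (Fin n) ℂ,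
        (exp ((t : ℂ) • ℒ) ρ).trace = ρ.trace) ↔ ∀ ρ, (ℒ ρ).trace = 0 :=
    apply_exp_ofReal_smul_eq_iff_apply_eq_zero ℒ
      (Matrix.traceLinearMap (Fin n) ℂ ℂ).toContinuousLinearMap
  rw [htrace]
  simp only [hℒ, Matrix.trace_lindblad_eq_trace_mul _ _ _ _ _ _ hΨ,
    Matrix.forall_trace_mul_eq_zero_iff, sub_eq_zero]
  rw [← Matrix.conjTranspose_inj, Matrix.conjTranspose_conjTranspose, Matrix.conjTranspose_smul,
    hG.eq, star_ofNat]

/-- trace-preserving criterion: for `ℒ = L(Ψ,G,H)` with `Ψ` completely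
positive and `G`, `H` Hermitian, the semigroup `exp(tℒ)` is trace preserving for all
`t ≥ 0` iff `Ψ*(I) = 2G`. -/
theorem trace_preserving_criterion {n : ℕ}
    (Ψ : Matrix (Fin n) (Fin n) ℂ →ₗ[ℂ] Matrix (Fin n) (Fin n) ℂ) (hΨ : CP Ψ)
    (G H : Matrix (Fin n) (Fin n) ℂ) (hG : G.IsHermitian) (hH : H.IsHermitian)
    (Ψadj : Matrix (Fin n) (Fin n) ℂ →ₗ[ℂ] Matrix (Fin n) (Fin n) ℂ)
    (hadj : ∀ B ρ : Matrix (Fin n) (Fin n) ℂ,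
      (Bᴴ * Ψ ρ).trace = ((Ψadj B)ᴴ * ρ).trace)
    (ℒ : Matrix (Fin n) (Fin n) ℂ →L[ℂ] Matrix (Fin n) (Fin n) ℂ)
    (hℒ : ∀ ρ : Matrix (Fin n) (Fin n) ℂ,
      ℒ ρ = Ψ ρ - (G * ρ + ρ * G) - Complex.I • (H * ρ - ρ * H)) :
    (∀ t : ℝ, 0 ≤ t → ∀ ρ : Matrix (Fin n) (Fin n) ℂ,
        (NormedSpace.exp ((t : ℂ) • ℒ) ρ).trace = ρ.trace) ↔
      Ψadj 1 = (2 : ℂ) • G :=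
  trace_preserving_criterion_general Ψ G H hG Ψadj hadj ℒ hℒ
end

section
/- Unitary averaging of a minimal GKSL generator (Lindblad's trick): let ℒ = L(Ψ,G,H) on M_n(ℂ), where G, H are Hermitian, tr(H) = 0, Ψ(X) = Σ_k A_k X A_kᴴ with tr(A_k) = 0 for every k, and 2G − Ψ*(I) is positive semidefinite. Let μ be the Haar probability measure on the unitary group U(n). Then ∫_{U(n)} ℒ(U) U⁻¹ dμ(U) = −G − (tr(G)/n)·I − iH; consequently, with ‖ℒ‖ := sup{‖ℒ(X)‖ : ‖X‖ ≤ 1} (operator norms on M_n(ℂ)), one has ‖G‖ ≤ ‖ℒ‖, ‖H‖ ≤ ‖ℒ‖, and ‖Ψ‖ ≤ 5‖ℒ‖. -/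
open scoped Kronecker ComplexOrder Matrix

open scoped Matrix.Norms.L2Operator

/-!
Left invariance of the Haar measure makes `D = ∫ U X U⁻¹ dμ` commute with every unitary;
since unitaries span `M_n(ℂ)`, `D` is the scalar `(tr X / n) • 1`. Writing
`ℒ ρ = ∑ₖ Aₖ ρ Aₖᴴ - (K ρ + ρ Kᴴ)` with `K = G + i H`, one has
`ℒ(U) U⁻¹ = ∑ₖ Aₖ (U Aₖᴴ U⁻¹) - K - U Kᴴ U⁻¹`, whose average is `-K - (tr G / n) • 1`
because the `Aₖ` and `H` are traceless.

This average has norm at most `‖ℒ‖` since `‖U‖ = 1`, and its real and imaginary parts are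
`-(G + (tr G / n) • 1)` and `-H`. From `2G ≥ Ψ*(1) = ∑ₖ Aₖᴴ Aₖ ≥ 0` we get `G ≥ 0`, hence
`‖G‖ ≤ ‖G + (tr G / n) • 1‖ ≤ ‖ℒ‖`. Finally `Ψ ρ = ℒ ρ + (G ρ + ρ G) + i (H ρ - ρ H)` gives
`‖Ψ‖ ≤ ‖ℒ‖ + 2‖G‖ + 2‖H‖ ≤ 5‖ℒ‖`.
-/

open MeasureTheory Matrix

namespace Matrix

variable {m : Type*} [Fintype m] [DecidableEq m]

lemma UnitaryGroup.norm_coe_le_one (U : unitaryGroup m ℂ) : ‖(U : Matrix m m ℂ)‖ ≤ 1 := by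
  nontriviality Matrix m m ℂ
  exact (CStarRing.norm_coe_unitary U).le

instance UnitaryGroup.compactSpace : CompactSpace (unitaryGroup m ℂ) :=
  isCompact_iff_compactSpace.mp <| Metric.isCompact_of_isClosed_isBounded isClosed_unitary <|
    (Metric.isBounded_closedBall (x := 0) (r := 1)).subset fun U hU => by
      simpa using UnitaryGroup.norm_coe_le_one ⟨U, hU⟩

lemma mem_range_scalar_of_forall_commute_unitary {D : Matrix m m ℂ}
    (h : ∀ U : unitaryGroup m ℂ, Commute (U : Matrix m m ℂ) D) :
    D ∈ Set.range (scalar m) := by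
  rw [← center_eq_range, Semigroup.mem_center_iff]
  intro X
  have hX : X ∈ Submodule.span ℂ (unitary (Matrix m m ℂ) : Set (Matrix m m ℂ)) := by
    rw [CStarAlgebra.span_unitary]; trivial
  induction hX using Submodule.span_induction with
  | mem U hU => exact h ⟨U, hU⟩
  | zero => simp
  | add X Y _ _ hX hY => rw [add_mul, mul_add, hX, hY]
  | smul c X _ hX => rw [smul_mul_assoc, mul_smul_comm, hX]

lemma integral_apply_apply {X : Type*} [MeasurableSpace X] {ν : Measure X}
    {f : X → Matrix m m ℂ} (hf : Integrable f ν) (i j : m) :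
    ∫ x, f x i j ∂ν = (∫ x, f x ∂ν) i j :=
  (LinearMap.toContinuousLinearMap (entryLinearMap ℂ ℂ i j)).integral_comp_comm hf

end Matrix

section HaarAverage

variable {m : Type*} [Fintype m] [DecidableEq m] [MeasurableSpace (unitaryGroup m ℂ)]
  (μ : Measure (unitaryGroup m ℂ)) [IsProbabilityMeasure μ]

local notation "𝕄" => Matrix m m ℂ

lemma norm_integral_apply_mul_inv_le (T : 𝕄 →L[ℂ] 𝕄) :
    ‖∫ U, T U * (↑U⁻¹ : 𝕄) ∂μ‖ ≤ ‖T‖ := by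
  refine (norm_integral_le_of_norm_le_const (C := ‖T‖) (.of_forall fun U => ?_)).trans_eq
    (by simp)
  calc ‖T U * (↑U⁻¹ : 𝕄)‖ ≤ ‖T U‖ * ‖(↑U⁻¹ : 𝕄)‖ := norm_mul_le _ _
    _ ≤ ‖T‖ * 1 * 1 :=
      mul_le_mul (T.le_opNorm_of_le (UnitaryGroup.norm_coe_le_one U))
        (UnitaryGroup.norm_coe_le_one _) (norm_nonneg _) (by positivity)
    _ = ‖T‖ := by ring

variable [BorelSpace (unitaryGroup m ℂ)]

lemma Continuous.integrable_unitaryGroup {E : Type*} [NormedAddCommGroup E]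
    {f : unitaryGroup m ℂ → E} (hf : Continuous f) : Integrable f μ :=
  hf.integrable_of_hasCompactSupport (HasCompactSupport.of_compactSpace f)

lemma integrable_unitary_mul_mul_inv (X : 𝕄) :
    Integrable (fun U : unitaryGroup m ℂ => (U : 𝕄) * X * (↑U⁻¹ : 𝕄)) μ :=
  Continuous.integrable_unitaryGroup μ (by fun_prop)

lemma integral_unitary_mul_mul_inv [μ.IsMulLeftInvariant] (X : 𝕄) :
    ∫ U, (U : 𝕄) * X * (↑U⁻¹ : 𝕄) ∂μ = (X.trace / Fintype.card m) • (1 : 𝕄) := by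
  have hX := integrable_unitary_mul_mul_inv μ X
  set D := ∫ U, (U : 𝕄) * X * (↑U⁻¹ : 𝕄) ∂μ with hD
  have hconj (V : unitaryGroup m ℂ) : (V : 𝕄) * D * (↑V⁻¹ : 𝕄) = D := by
    rw [hD, ← integral_const_mul_of_integrable hX,
      ← integral_mul_const_of_integrable (hX.const_mul _)]
    conv_rhs => rw [← integral_mul_left_eq_self _ V]
    simp [_root_.mul_inv_rev, mul_assoc]
  have hcomm (V : unitaryGroup m ℂ) : Commute (V : 𝕄) D :=
    calc (V : 𝕄) * D = V * D * (↑V⁻¹ : 𝕄) * V := by simp [mul_assoc]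
      _ = D * V := by rw [hconj]
  obtain ⟨d, hd⟩ := mem_range_scalar_of_forall_commute_unitary hcomm
  have htrace : D.trace = X.trace := by
    let tr := LinearMap.toContinuousLinearMap (traceLinearMap m ℂ ℂ)
    calc D.trace = tr D := rfl
      _ = ∫ U, tr ((U : 𝕄) * X * (↑U⁻¹ : 𝕄)) ∂μ := (tr.integral_comp_comm hX).symm
      _ = X.trace := by simp [tr, trace_mul_cycle (B := X), ← Unitary.star_eq_inv]
  rcases isEmpty_or_nonempty m with hm | hm
  · exact Subsingleton.elim _ _
  have hD : D = d • 1 := by rw [← hd, smul_one_eq_diagonal]; rfl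
  rw [hD, trace_smul, trace_one, smul_eq_mul] at htrace
  rw [hD, ← htrace, mul_div_cancel_right₀ _ (by simp)]

lemma integral_gksl_mul_inv [μ.IsMulLeftInvariant] {ι : Type*} [Fintype ι]
    (A : ι → 𝕄) (K : 𝕄) :
    ∫ U, (∑ k, A k * U * (A k)ᴴ - (K * U + U * Kᴴ)) * (↑U⁻¹ : 𝕄) ∂μ
      = ∑ k, ((A k)ᴴ.trace / Fintype.card m) • A k - K
        - (Kᴴ.trace / Fintype.card m) • (1 : 𝕄) := by
  have hexpand (U : unitaryGroup m ℂ) :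
      (∑ k, A k * U * (A k)ᴴ - (K * U + U * Kᴴ)) * (↑U⁻¹ : 𝕄)
        = ∑ k, A k * ((U : 𝕄) * (A k)ᴴ * (↑U⁻¹ : 𝕄)) - K - (U : 𝕄) * Kᴴ * (↑U⁻¹ : 𝕄) := by
    have hU : (U : 𝕄) * (↑U⁻¹ : 𝕄) = 1 := by simp [← Unitary.star_eq_inv]
    simp only [Finset.sum_mul, sub_mul, add_mul, mul_assoc, hU, mul_one]
    abel
  have hint (B : 𝕄) := integrable_unitary_mul_mul_inv μ B
  have hsum : Integrable
      (fun U : unitaryGroup m ℂ => ∑ k, A k * ((U : 𝕄) * (A k)ᴴ * (↑U⁻¹ : 𝕄))) μ :=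
    integrable_finsetSum _ fun k _ => (hint _).const_mul _
  have hsum_sub : Integrable (fun U : unitaryGroup m ℂ =>
      ∑ k, A k * ((U : 𝕄) * (A k)ᴴ * (↑U⁻¹ : 𝕄)) - K) μ := hsum.sub (integrable_const K)
  simp_rw [hexpand]
  rw [integral_sub hsum_sub (hint Kᴴ), integral_sub hsum (integrable_const K),
    integral_finsetSum _ fun k _ => (hint _).const_mul _]
  simp only [integral_const_mul_of_integrable (hint _), integral_unitary_mul_mul_inv,
    mul_smul_comm, mul_one, integral_const, probReal_univ, one_smul]

lemma integral_lindblad_mul_inv [μ.IsMulLeftInvariant] {ι : Type*} [Fintype ι] {A : ι → 𝕄}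
    {G H : 𝕄} (hG : G.IsHermitian) (hH : H.IsHermitian) (hH0 : H.trace = 0)
    (hA0 : ∀ k, (A k).trace = 0) {ℒ : 𝕄 → 𝕄}
    (hℒ : ∀ ρ, ℒ ρ = ∑ k, A k * ρ * (A k)ᴴ - (G * ρ + ρ * G) - Complex.I • (H * ρ - ρ * H)) :
    ∫ U, ℒ U * (↑U⁻¹ : 𝕄) ∂μ = -G - (G.trace / Fintype.card m) • 1 - Complex.I • H := by
  set K := G + Complex.I • H
  have hℒK (ρ : 𝕄) : ℒ ρ = ∑ k, A k * ρ * (A k)ᴴ - (K * ρ + ρ * Kᴴ) := by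
    simp only [hℒ, K, conjTranspose_add, conjTranspose_smul, hG.eq, hH.eq, RCLike.star_def,
      Complex.conj_I, add_mul, mul_add, smul_mul_assoc, mul_smul_comm, neg_smul, mul_neg]
    module
  simp_rw [hℒK]
  rw [integral_gksl_mul_inv]
  simp [K, trace_conjTranspose, hA0, hH0, hG.eq, hH.eq]
  abel

end HaarAverage

section NormBounds

open Complex

variable {A : Type*} [SeminormedAddCommGroup A] [StarAddMonoid A] [NormedSpace ℂ A]
  [StarModule ℂ A] [NormedStarGroup A]

lemma IsSelfAdjoint.norm_le_norm_add_I_smul {a b : A} (ha : IsSelfAdjoint a)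
    (hb : IsSelfAdjoint b) : ‖a‖ ≤ ‖a + I • b‖ := by
  have hre : (realPart (a + I • b) : A) = a := by
    simp [realPart_I_smul, hb.imaginaryPart, ha.coe_realPart]
  calc ‖a‖ = ‖realPart (a + I • b)‖ := by rw [← AddSubgroup.norm_coe, hre]
    _ ≤ ‖a + I • b‖ := realPart.norm_le _

lemma IsSelfAdjoint.norm_le_norm_add_I_smul' {a b : A} (ha : IsSelfAdjoint a)
    (hb : IsSelfAdjoint b) : ‖b‖ ≤ ‖a + I • b‖ := by
  have him : (_root_.imaginaryPart (a + I • b) : A) = b := by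
    simp [imaginaryPart_I_smul, ha.imaginaryPart, hb.coe_realPart]
  calc ‖b‖ = ‖_root_.imaginaryPart (a + I • b)‖ := by rw [← AddSubgroup.norm_coe, him]
    _ ≤ ‖a + I • b‖ := imaginaryPart.norm_le _

end NormBounds

namespace Matrix.PosSemidef

lemma of_two_smul_sub {m : Type*} {G P : Matrix m m ℂ} (h : ((2 : ℂ) • G - P).PosSemidef)
    (hP : P.PosSemidef) : G.PosSemidef := by
  convert (h.add hP).smul (by positivity : (0 : ℂ) ≤ 2⁻¹) using 1
  module

variable {m : Type*} [Fintype m] [DecidableEq m]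

open scoped MatrixOrder in
lemma norm_le_norm_add_smul_one {G : Matrix m m ℂ} (hG : G.PosSemidef) {c : ℂ} (hc : 0 ≤ c) :
    ‖G‖ ≤ ‖G + c • 1‖ :=
  CStarAlgebra.norm_le_norm_of_nonneg_of_le hG.nonneg
    (le_add_of_nonneg_right (smul_nonneg hc zero_le_one))

lemma norm_le_norm_add_smul_one_add_I_smul {G H : Matrix m m ℂ} (hG : G.PosSemidef)
    (hH : H.IsHermitian) {c : ℂ} (hc : 0 ≤ c) :
    ‖G‖ ≤ ‖G + c • 1 + Complex.I • H‖ ∧ ‖H‖ ≤ ‖G + c • 1 + Complex.I • H‖ := by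
  have hsa : IsSelfAdjoint (G + c • 1) := (hG.add (PosSemidef.one.smul hc)).isHermitian
  exact ⟨(hG.norm_le_norm_add_smul_one hc).trans (hsa.norm_le_norm_add_I_smul hH),
    hsa.norm_le_norm_add_I_smul' hH⟩

end Matrix.PosSemidef

lemma norm_jump_le {A : Type*} [NormedRing A] [NormedAlgebra ℂ A] (Ψ ℒ : A →L[ℂ] A) (G H : A)
    (hℒ : ∀ ρ, ℒ ρ = Ψ ρ - (G * ρ + ρ * G) - Complex.I • (H * ρ - ρ * H)) :
    ‖Ψ‖ ≤ ‖ℒ‖ + 2 * ‖G‖ + 2 * ‖H‖ := by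
  refine Ψ.opNorm_le_bound (by positivity) fun ρ => ?_
  have hΨ : Ψ ρ = ℒ ρ + (G * ρ + ρ * G) + Complex.I • (H * ρ - ρ * H) := by
    rw [hℒ]; abel
  calc ‖Ψ ρ‖ ≤ ‖ℒ ρ‖ + (‖G * ρ‖ + ‖ρ * G‖) + (‖H * ρ‖ + ‖ρ * H‖) := by
        rw [hΨ]
        refine (norm_add₃_le).trans (add_le_add (add_le_add le_rfl (norm_add_le _ _)) ?_)
        simpa [norm_smul] using norm_sub_le _ _
    _ ≤ ‖ℒ‖ * ‖ρ‖ + (‖G‖ * ‖ρ‖ + ‖ρ‖ * ‖G‖) + (‖H‖ * ‖ρ‖ + ‖ρ‖ * ‖H‖) := by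
        gcongr
        · exact ℒ.le_opNorm ρ
        all_goals exact norm_mul_le _ _
    _ = (‖ℒ‖ + 2 * ‖G‖ + 2 * ‖H‖) * ‖ρ‖ := by ring

lemma Matrix.adjoint_kraus_apply {m R ι : Type*} [Fintype m] [CommRing R] [StarRing R]
    [Fintype ι] {A : ι → Matrix m m R} {Φ Φadj : Matrix m m R → Matrix m m R}
    (hΦ : ∀ X, Φ X = ∑ k, A k * X * (A k)ᴴ)
    (hadj : ∀ B ρ, (Bᴴ * Φ ρ).trace = ((Φadj B)ᴴ * ρ).trace) (B : Matrix m m R) :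
    Φadj B = ∑ k, (A k)ᴴ * B * A k := by
  rw [← conjTranspose_inj, ext_iff_trace_mul_right]
  intro ρ
  rw [← hadj, hΦ]
  simp only [conjTranspose_sum, conjTranspose_mul, conjTranspose_conjTranspose, Finset.sum_mul,
    Finset.mul_sum, trace_sum]
  exact Finset.sum_congr rfl fun k _ => by
    simp only [mul_assoc]; rw [trace_mul_comm (A k)ᴴ]; simp only [mul_assoc]

/-- Lindblad's trick: unitary averaging of a minimal GKSL generator.
`M_n(ℂ)` carries the `L²` operator norm, so that the norms `‖ℒ‖`, `‖Ψ‖` of continuous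
linear maps below are exactly `sup {‖ℒ X‖ : ‖X‖ ≤ 1}` for matrix operator norms. -/
theorem lindblad_unitary_averaging {n : ℕ}
    [MeasurableSpace (Matrix.unitaryGroup (Fin n) ℂ)]
    [BorelSpace (Matrix.unitaryGroup (Fin n) ℂ)]
    (μ : MeasureTheory.Measure (Matrix.unitaryGroup (Fin n) ℂ))
    [μ.IsHaarMeasure] [MeasureTheory.IsProbabilityMeasure μ]
    (Ψ : Matrix (Fin n) (Fin n) ℂ →L[ℂ] Matrix (Fin n) (Fin n) ℂ)
    (G H : Matrix (Fin n) (Fin n) ℂ) (hG : G.IsHermitian) (hH : H.IsHermitian)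
    (hH0 : H.trace = 0)
    (ι : Type) [Fintype ι] (A : ι → Matrix (Fin n) (Fin n) ℂ)
    (hKraus : ∀ X : Matrix (Fin n) (Fin n) ℂ, Ψ X = ∑ k : ι, A k * X * (A k)ᴴ)
    (hA0 : ∀ k : ι, (A k).trace = 0)
    (Ψadj : Matrix (Fin n) (Fin n) ℂ →ₗ[ℂ] Matrix (Fin n) (Fin n) ℂ)
    (hadj : ∀ B ρ : Matrix (Fin n) (Fin n) ℂ,
      (Bᴴ * Ψ ρ).trace = ((Ψadj B)ᴴ * ρ).trace)
    (hTNI : ((2 : ℂ) • G - Ψadj 1).PosSemidef)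
    (ℒ : Matrix (Fin n) (Fin n) ℂ →L[ℂ] Matrix (Fin n) (Fin n) ℂ)
    (hℒ : ∀ ρ : Matrix (Fin n) (Fin n) ℂ,
      ℒ ρ = Ψ ρ - (G * ρ + ρ * G) - Complex.I • (H * ρ - ρ * H)) :
    (∀ i j : Fin n,
      (∫ U : Matrix.unitaryGroup (Fin n) ℂ,
          (ℒ (U : Matrix (Fin n) (Fin n) ℂ) *
            ((U⁻¹ : Matrix.unitaryGroup (Fin n) ℂ) : Matrix (Fin n) (Fin n) ℂ)) i j ∂μ)
        = (-G - (G.trace / (n : ℂ)) • (1 : Matrix (Fin n) (Fin n) ℂ)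
            - Complex.I • H) i j) ∧
    ‖G‖ ≤ ‖ℒ‖ ∧ ‖H‖ ≤ ‖ℒ‖ ∧ ‖Ψ‖ ≤ 5 * ‖ℒ‖ := by
  have hint : ∫ U, ℒ U * (↑U⁻¹ : Matrix (Fin n) (Fin n) ℂ) ∂μ
      = -G - (G.trace / (n : ℂ)) • 1 - Complex.I • H := by
    simpa using integral_lindblad_mul_inv μ hG hH hH0 hA0 fun ρ => by rw [hℒ, hKraus]
  have hGpsd : G.PosSemidef := hTNI.of_two_smul_sub <| by
    rw [adjoint_kraus_apply hKraus hadj]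
    exact posSemidef_sum _ fun k _ => by simpa using posSemidef_conjTranspose_mul_self (A k)
  have hbound : ‖G + (G.trace / (n : ℂ)) • 1 + Complex.I • H‖ ≤ ‖ℒ‖ := by
    have hneg : G + (G.trace / (n : ℂ)) • 1 + Complex.I • H
        = -∫ U, ℒ U * (↑U⁻¹ : Matrix (Fin n) (Fin n) ℂ) ∂μ := by
      rw [hint]; abel
    rw [hneg, norm_neg]
    exact norm_integral_apply_mul_inv_le μ ℒ
  obtain ⟨hGℒ, hHℒ⟩ := (hGpsd.norm_le_norm_add_smul_one_add_I_smul hH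
    (div_nonneg hGpsd.trace_nonneg (Nat.cast_nonneg n))).imp (·.trans hbound) (·.trans hbound)
  refine ⟨fun i j => ?_, hGℒ, hHℒ, (norm_jump_le Ψ ℒ G H hℒ).trans (by linarith)⟩
  rw [integral_apply_apply (Continuous.integrable_unitaryGroup μ (by fun_prop)), hint]
end

section
/- Invertibility of evolution families (semigroupoids): let X be a complex Banach space, −∞ ≤ α < ω ≤ ∞, and let Λ(t,s) be bounded linear operators on X defined for α < s ≤ t < ω, jointly norm-continuous in (t,s), satisfying Λ(t,t) = id for all t and Λ(u,t) ∘ Λ(t,s) = Λ(u,s) whenever s ≤ t ≤ u. Then Λ(t,s) is an invertible element of the Banach algebra of bounded operators on X for every s ≤ t. -/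
/-- invertibility of evolution families: a jointly norm-continuous family
`Λ(t,s)` (for `α < s ≤ t < ω`) of bounded operators on a complex Banach space with
`Λ(t,t) = id` and `Λ(u,t) ∘ Λ(t,s) = Λ(u,s)` consists of invertible elements of the
Banach algebra of bounded operators. -/
theorem evolution_family_invertible
    {X : Type*} [NormedAddCommGroup X] [NormedSpace ℂ X] [CompleteSpace X]
    (α ω : EReal) (hαω : α < ω)
    (Λ : ℝ → ℝ → (X →L[ℂ] X))
    (hcont : ContinuousOn (fun p : ℝ × ℝ => Λ p.1 p.2)
      {p : ℝ × ℝ | α < (p.2 : EReal) ∧ p.2 ≤ p.1 ∧ (p.1 : EReal) < ω})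
    (hid : ∀ t : ℝ, α < (t : EReal) → (t : EReal) < ω → Λ t t = 1)
    (hcomp : ∀ s t u : ℝ, α < (s : EReal) → s ≤ t → t ≤ u → (u : EReal) < ω →
      (Λ u t).comp (Λ t s) = Λ u s) :
    ∀ s t : ℝ, α < (s : EReal) → s ≤ t → (t : EReal) < ω → IsUnit (Λ t s) := by
  intro s t hs hst ht
  -- basic coercion facts
  have hst' : (s : EReal) ≤ t := EReal.coe_le_coe_iff.mpr hst
  have hsω : (s : EReal) < ω := lt_of_le_of_lt hst' ht
  -- units from norm estimate
  have key : ∀ a : X →L[ℂ] X, ‖a - 1‖ < 1 → IsUnit a := by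
    intro a ha
    have h1 : ‖(1 : X →L[ℂ] X) - a‖ < 1 := by rwa [norm_sub_rev] at ha
    have := (Units.oneSub ((1 : X →L[ℂ] X) - a) h1).isUnit
    simpa using this
  set S : Set ℝ := {r | s ≤ r ∧ r ≤ t ∧ IsUnit (Λ r s)} with hS
  have hsS : s ∈ S := ⟨le_refl s, hst, by
    rw [hid s hs hsω]; exact isUnit_one⟩
  have hne : S.Nonempty := ⟨s, hsS⟩
  have hbdd : BddAbove S := ⟨t, fun r hr => hr.2.1⟩
  set c := sSup S with hc
  have hsc : s ≤ c := le_csSup hbdd hsS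
  have hct : c ≤ t := csSup_le hne fun r hr => hr.2.1
  have hαc : α < (c : EReal) := lt_of_lt_of_le hs (EReal.coe_le_coe_iff.mpr hsc)
  have hcω : (c : EReal) < ω := lt_of_le_of_lt (EReal.coe_le_coe_iff.mpr hct) ht
  -- continuity at (c, c)
  have hmem : ((c, c) : ℝ × ℝ) ∈ {p : ℝ × ℝ | α < (p.2 : EReal) ∧ p.2 ≤ p.1 ∧ (p.1 : EReal) < ω} :=
    ⟨hαc, le_refl c, hcω⟩
  have hcw := hcont (c, c) hmem
  rw [Metric.continuousWithinAt_iff] at hcw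
  obtain ⟨δ, hδpos, hδ⟩ := hcw 1 one_pos
  -- the key local invertibility: for u ≤ v both within δ of c (and in domain), Λ v u is a unit
  have hloc : ∀ u v : ℝ, s ≤ u → u ≤ v → (v : EReal) < ω → |u - c| < δ → |v - c| < δ →
      IsUnit (Λ v u) := by
    intro u v hsu huv hvω hu hv
    have hαu : α < (u : EReal) := lt_of_lt_of_le hs (EReal.coe_le_coe_iff.mpr hsu)
    have hmemuv : ((v, u) : ℝ × ℝ) ∈
        {p : ℝ × ℝ | α < (p.2 : EReal) ∧ p.2 ≤ p.1 ∧ (p.1 : EReal) < ω} := ⟨hαu, huv, hvω⟩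
    have hdist : dist ((v, u) : ℝ × ℝ) (c, c) < δ := by
      rw [Prod.dist_eq]
      simp only [Real.dist_eq]
      exact max_lt hv hu
    have := hδ hmemuv hdist
    have h1 : dist (Λ v u) (Λ c c) < 1 := this
    rw [hid c hαc hcω, dist_eq_norm] at h1
    exact key _ h1
  -- Step 1 : c ∈ S
  have hcS : IsUnit (Λ c s) := by
    rcases eq_or_lt_of_le hsc with heq | hlt
    · rw [← heq, hid s hs hsω]; exact isUnit_one
    · -- choose u ∈ S with c - δ < u
      obtain ⟨u, huS, hu⟩ := exists_lt_of_lt_csSup hne (show c - δ < c by linarith)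
      have huc : u ≤ c := le_csSup hbdd huS
      have hΛcu : IsUnit (Λ c u) := by
        refine hloc u c huS.1 huc hcω ?_ ?_
        · rw [abs_lt]; constructor <;> linarith
        · simpa using hδpos
      have hcompu := hcomp s u c hs huS.1 huc hcω
      have : Λ c u * Λ u s = Λ c s := hcompu
      rw [← this]
      exact hΛcu.mul huS.2.2
  -- Step 2 : c = t
  rcases eq_or_lt_of_le hct with heq | hlt
  · rwa [← heq]
  · exfalso
    set v := min t (c + δ / 2) with hv
    have hcv : c < v := lt_min hlt (by linarith)
    have hvt : v ≤ t := min_le_left _ _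
    have hvω : (v : EReal) < ω := lt_of_le_of_lt (EReal.coe_le_coe_iff.mpr hvt) ht
    have hΛvc : IsUnit (Λ v c) := by
      refine hloc c v hsc hcv.le hvω (by simpa using hδpos) ?_
      rw [abs_lt]
      constructor
      · linarith
      · have : v ≤ c + δ / 2 := min_le_right _ _
        linarith
    have hcompv := hcomp s c v hs hsc hcv.le hvω
    have hΛvs : Λ v c * Λ c s = Λ v s := hcompv
    have hvS : v ∈ S := ⟨le_trans hsc hcv.le, hvt, by rw [← hΛvs]; exact hΛvc.mul hcS⟩
    exact absurd (le_csSup hbdd hvS) (not_le.mpr hcv)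
end

section
/- Time-dependent GKSL sufficiency (finite dimensions): let −∞ ≤ α < ω ≤ ∞ and let ℒ : (α,ω) → End(M_n(ℂ)) be a continuous family of linear endomorphisms such that for each t there exist a completely positive linear map Ψ_t from M_n(ℂ) to itself and Hermitian matrices G_t, H_t with ℒ(t)(ρ) = Ψ_t(ρ) − (G_tρ + ρG_t) − i(H_tρ − ρH_t) for all ρ. Suppose Λ(t,s), defined for α < s ≤ t < ω, satisfies Λ(s,s) = id and ∂Λ(t,s)/∂t = ℒ(t) ∘ Λ(t,s) (derivative in the finite-dimensional space End(M_n(ℂ))). Then Λ(t,s) is completely positive for all s ≤ t. -/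
open scoped Kronecker ComplexOrder Matrix

attribute [local instance] Matrix.normedAddCommGroup Matrix.normedSpace

instance matrixCLM_continuousSMul_real {n : ℕ} :
    ContinuousSMul ℝ (Matrix (Fin n) (Fin n) ℂ →L[ℂ] Matrix (Fin n) (Fin n) ℂ) :=
  @IsBoundedSMul.continuousSMul ℝ (Matrix (Fin n) (Fin n) ℂ →L[ℂ] Matrix (Fin n) (Fin n) ℂ) _
    ContinuousLinearMap.toSeminormedAddCommGroup.toPseudoMetricSpace _ _ _
    (@NormedSpace.toIsBoundedSMul _ _ _ ContinuousLinearMap.toSeminormedAddCommGroup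
      ContinuousLinearMap.toNormedSpace)

/-!
Fix `N ≥ 1` and a PSD `M` on `ℂⁿ ⊗ ℂᴺ`. Then `A(τ) = (Λ(τ,s) ⊗ id_N) M` solves the linear ODE
`A' = (ℒ(τ) ⊗ id_N) A`, and the amplified generator again has the form `B ↦ Φ B - (C B + B Cᴴ)`
with `Φ = Ψ_τ ⊗ id_N` positive. Such a generator commutes with `ᴴ`, so `A` stays Hermitian by
Grönwall, and it satisfies the minimum principle: `B ≥ 0`, `B x = 0` imply `Re ⟨x, L(B) x⟩ ≥ 0`.
If `A(τ) + ε e^{c(τ-s)} I` first failed to be positive definite at `τ₀`, along a unit vector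
`x₀`, then `B = A(τ₀) + ε e^{c(τ₀-s)} I` would be PSD with `B x₀ = 0`, and the minimum principle
(with `c` larger than the bound on the generators) would make `⟨x₀, (A + ε e^{c(τ-s)} I) x₀⟩`
strictly increasing at `τ₀`, although it decreases to `0` there. Letting `ε → 0` gives `A(t) ≥ 0`.
-/

open Matrix Set

theorem exists_first_zero_of_continuousOn {X : Type*} [TopologicalSpace X] {F : ℝ → X → ℝ}
    {K : Set X} {s t : ℝ} (hK : IsCompact K)
    (hF : ContinuousOn (Function.uncurry F) (Icc s t ×ˢ K)) (hs : ∀ x ∈ K, 0 < F s x)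
    (hneg : ∃ τ ∈ Icc s t, ∃ x ∈ K, F τ x ≤ 0) :
    ∃ τ₀ ∈ Ioc s t, ∃ x₀ ∈ K, F τ₀ x₀ = 0 ∧ ∀ σ ∈ Icc s τ₀, ∀ y ∈ K, 0 ≤ F σ y := by
  obtain ⟨τ, hτ, x, hx, hFx⟩ := hneg
  have hT := hF.lowerSemicontinuousOn.isCompact_inter_preimage_Iic (isCompact_Icc.prod hK) 0
  obtain ⟨⟨τ₀, x₀⟩, ⟨⟨hτ₀, hx₀⟩, hF₀⟩, hmin⟩ :=
    hT.exists_isMinOn ⟨(τ, x), ⟨hτ, hx⟩, hFx⟩ continuous_fst.continuousOn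
  have hsτ₀ : s < τ₀ := hτ₀.1.lt_of_ne fun h => (hs x₀ hx₀).not_ge (h ▸ hF₀)
  have hbefore : ∀ σ ∈ Ico s τ₀, ∀ y ∈ K, 0 < F σ y := fun σ hσ y hy => by
    by_contra! h
    exact hσ.2.not_ge (@hmin (σ, y) ⟨⟨⟨hσ.1, hσ.2.le.trans hτ₀.2⟩, hy⟩, h⟩)
  have hat : ∀ y ∈ K, 0 ≤ F τ₀ y := fun y hy => by
    have hcont : ContinuousWithinAt (F · y) (Ico s τ₀) τ₀ :=
      (hF (τ₀, y) ⟨hτ₀, hy⟩).comp (f := fun σ => (σ, y))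
        (continuousWithinAt_id.prodMk continuousWithinAt_const)
        fun σ hσ => ⟨⟨hσ.1, hσ.2.le.trans hτ₀.2⟩, hy⟩
    have := right_nhdsWithin_Ico_neBot hsτ₀
    exact ge_of_tendsto hcont (eventually_nhdsWithin_of_forall fun σ hσ => (hbefore σ hσ y hy).le)
  refine ⟨τ₀, ⟨hsτ₀, hτ₀.2⟩, x₀, hx₀, le_antisymm hF₀ (hat x₀ hx₀), fun σ hσ y hy => ?_⟩
  rcases hσ.2.lt_or_eq with h | rfl
  exacts [(hbefore σ ⟨hσ.1, h⟩ y hy).le, hat y hy]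

theorem IsMinOn.hasDerivWithinAt_Icc_nonpos {f : ℝ → ℝ} {f' a b : ℝ} (hab : a < b)
    (hmin : IsMinOn f (Icc a b) b) (hf : HasDerivWithinAt f f' (Icc a b) b) : f' ≤ 0 := by
  have := hmin.localize.hasFDerivWithinAt_nonneg hf.hasFDerivWithinAt
    (sub_mem_posTangentConeAt_of_segment_subset (y := a)
      (by rw [segment_symm, segment_eq_Icc hab.le]))
  rw [ContinuousLinearMap.toSpanSingleton_apply, smul_eq_mul] at this
  exact nonpos_of_mul_nonneg_right this (sub_neg.2 hab)

section QuadraticForm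

variable {d : Type*} [Fintype d]

noncomputable def reQuadForm (x : d → ℂ) : Matrix d d ℂ →L[ℝ] ℝ :=
  Complex.reCLM.comp <| LinearMap.toContinuousLinearMap
    { toFun := fun B => star x ⬝ᵥ B *ᵥ x
      map_add' := fun B C => by simp [add_mulVec]
      map_smul' := fun r B => by simp [smul_mulVec] }

theorem reQuadForm_apply (x : d → ℂ) (B : Matrix d d ℂ) :
    reQuadForm x B = (star x ⬝ᵥ B *ᵥ x).re := rfl

theorem continuous_reQuadForm :
    Continuous fun p : Matrix d d ℂ × (d → ℂ) => reQuadForm p.2 p.1 :=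
  Complex.continuous_re.comp <| continuous_snd.star.dotProduct <|
    continuous_fst.matrix_mulVec continuous_snd

theorem reQuadForm_smul_vec (c : ℂ) (x : d → ℂ) (B : Matrix d d ℂ) :
    reQuadForm (c • x) B = ‖c‖ ^ 2 * reQuadForm x B := by
  rw [reQuadForm_apply, reQuadForm_apply, star_smul, mulVec_smul, dotProduct_smul,
    smul_dotProduct, smul_smul, smul_eq_mul, Complex.star_def, Complex.mul_conj',
    ← Complex.ofReal_pow, Complex.re_ofReal_mul]

theorem reQuadForm_one [DecidableEq d] (x : d → ℂ) : reQuadForm x 1 = ∑ i, ‖x i‖ ^ 2 := by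
  simp [reQuadForm_apply, dotProduct, Complex.conj_mul', ← Complex.ofReal_pow]

theorem Matrix.IsHermitian.ofReal_reQuadForm {B : Matrix d d ℂ} (hB : B.IsHermitian)
    (x : d → ℂ) : (reQuadForm x B : ℂ) = star x ⬝ᵥ B *ᵥ x :=
  Complex.ext rfl (hB.im_star_dotProduct_mulVec_self x).symm

theorem abs_reQuadForm_le [DecidableEq d] (x : d → ℂ) (C : Matrix d d ℂ) :
    |reQuadForm x C| ≤ Fintype.card d * ‖C‖ * reQuadForm x 1 := by
  have hsum : ‖star x ⬝ᵥ C *ᵥ x‖ ≤ ‖C‖ * (∑ i, ‖x i‖) ^ 2 := calc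
    _ ≤ ∑ i, ∑ j, ‖x i‖ * (‖C‖ * ‖x j‖) := by
      simp only [dotProduct, mulVec, Finset.mul_sum, Pi.star_apply]
      refine (norm_sum_le _ _).trans (Finset.sum_le_sum fun i _ =>
        (norm_sum_le _ _).trans (Finset.sum_le_sum fun j _ => ?_))
      rw [norm_mul, norm_mul, norm_star]
      gcongr
      exact norm_entry_le_entrywise_sup_norm C
    _ = ‖C‖ * (∑ i, ‖x i‖) ^ 2 := by
      rw [sq, Finset.sum_mul_sum, Finset.mul_sum]
      exact Finset.sum_congr rfl fun i _ => by
        rw [Finset.mul_sum]; exact Finset.sum_congr rfl fun j _ => by ring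
  calc |reQuadForm x C| ≤ ‖star x ⬝ᵥ C *ᵥ x‖ := Complex.abs_re_le_norm _
    _ ≤ ‖C‖ * (∑ i, ‖x i‖) ^ 2 := hsum
    _ ≤ ‖C‖ * (Fintype.card d * ∑ i, ‖x i‖ ^ 2) := by
      gcongr; exact sq_sum_le_card_mul_sum_sq
    _ = _ := by rw [reQuadForm_one]; ring

theorem Matrix.PosSemidef.of_reQuadForm_nonneg {B : Matrix d d ℂ} (hB : B.IsHermitian)
    (h : ∀ x, 0 ≤ reQuadForm x B) : B.PosSemidef :=
  .of_dotProduct_mulVec_nonneg hB fun x => by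
    rw [← hB.ofReal_reQuadForm]; exact_mod_cast h x

theorem Matrix.PosSemidef.of_reQuadForm_nonneg_of_mem_sphere {B : Matrix d d ℂ}
    (hB : B.IsHermitian) (h : ∀ x ∈ Metric.sphere (0 : d → ℂ) 1, 0 ≤ reQuadForm x B) :
    B.PosSemidef := by
  refine .of_reQuadForm_nonneg hB fun x => ?_
  rcases eq_or_ne x 0 with rfl | hx
  · simp [reQuadForm_apply]
  · have hy : (‖x‖⁻¹ : ℂ) • x ∈ Metric.sphere (0 : d → ℂ) 1 := by
      simp [norm_smul, hx]
    have := h _ hy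
    rw [reQuadForm_smul_vec, norm_inv, Complex.norm_real, norm_norm] at this
    exact (mul_nonneg_iff_of_pos_left (pow_pos (inv_pos.2 (norm_pos_iff.2 hx)) 2)).1 this

theorem Matrix.IsHermitian.posSemidef_add_smul_one [DecidableEq d] {ρ : Matrix d d ℂ}
    (hρ : ρ.IsHermitian) : (ρ + (Fintype.card d * ‖ρ‖) • (1 : Matrix d d ℂ)).PosSemidef := by
  refine .of_reQuadForm_nonneg (hρ.add (isHermitian_one.smul (.all _))) fun x => ?_
  rw [map_add, map_smul, smul_eq_mul]
  linarith [neg_abs_le (reQuadForm x ρ), abs_reQuadForm_le x ρ]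

/-- The name comes from semigroup theory, where this property characterizes the generators of
positivity-preserving evolutions. -/
def PositiveMinimumPrinciple (L : Matrix d d ℂ →ₗ[ℂ] Matrix d d ℂ) : Prop :=
  ∀ B : Matrix d d ℂ, B.PosSemidef → ∀ x, B *ᵥ x = 0 → 0 ≤ reQuadForm x (L B)

end QuadraticForm

section PositiveMap

open ComplexStarModule

variable {d e : Type*} [Fintype d] [DecidableEq d]

theorem Matrix.IsHermitian.map_of_posSemidef {f : Matrix d d ℂ →ₗ[ℂ] Matrix e e ℂ}
    (hf : ∀ B, B.PosSemidef → (f B).PosSemidef) {ρ : Matrix d d ℂ} (hρ : ρ.IsHermitian) :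
    (f ρ).IsHermitian := by
  have h := (hf _ hρ.posSemidef_add_smul_one).isHermitian.sub
    (hf _ (PosSemidef.one.smul (by positivity : (0 : ℝ) ≤ Fintype.card d * ‖ρ‖))).isHermitian
  rwa [map_add, add_sub_cancel_right] at h

theorem map_conjTranspose_of_posSemidef {f : Matrix d d ℂ →ₗ[ℂ] Matrix e e ℂ}
    (hf : ∀ B, B.PosSemidef → (f B).PosSemidef) (B : Matrix d d ℂ) : f Bᴴ = (f B)ᴴ := by
  have hsa : ∀ a : selfAdjoint (Matrix d d ℂ), star (f a) = f a := fun a =>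
    (IsHermitian.map_of_posSemidef hf a.2).eq
  rw [← star_eq_conjTranspose, ← star_eq_conjTranspose, ← realPart_add_I_smul_imaginaryPart B]
  simp [star_add, star_smul, hsa, (ℜ B).2.star_eq, (ℑ B).2.star_eq]

end PositiveMap

section LinearMatrixODE

variable {d : Type*} [Fintype d] {L : ℝ → Matrix d d ℂ →ₗ[ℂ] Matrix d d ℂ}
  {A : ℝ → Matrix d d ℂ} {s t K : ℝ}

theorem isHermitian_of_hasDerivWithinAt
    (hA : ∀ τ ∈ Icc s t, HasDerivWithinAt A (L τ (A τ)) (Icc s t) τ)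
    (hL : ∀ τ ∈ Icc s t, ∀ B, ‖L τ B‖ ≤ K * ‖B‖)
    (hstar : ∀ τ ∈ Icc s t, ∀ B, L τ Bᴴ = (L τ B)ᴴ) (hs : (A s).IsHermitian) :
    ∀ τ ∈ Icc s t, (A τ).IsHermitian := by
  intro τ hτ
  refine sub_eq_zero.1 <| eq_zero_of_abs_deriv_le_mul_abs_self_of_eq_zero_right
    (f := fun σ => (A σ)ᴴ - A σ) (f' := fun σ => L σ ((A σ)ᴴ - A σ)) (K := K)
    (fun σ hσ => ((hA σ hσ).continuousWithinAt.star).sub (hA σ hσ).continuousWithinAt)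
    (fun σ hσ => ?_) (sub_eq_zero.2 hs) (fun σ hσ => hL σ (Ico_subset_Icc_self hσ) _) τ hτ
  have hσ' := Ico_subset_Icc_self hσ
  convert ((hA σ hσ').star.sub (hA σ hσ')).mono_of_mem_nhdsWithin (Icc_mem_nhdsGE_of_mem hσ)
    using 1
  · rfl
  · rw [map_sub, hstar σ hσ']
    rfl

/-- At a touching point `(A + δ I) x = 0`, the velocity of `Re ⟨x, (A + δ I) x⟩` along
`A' = L A`, `δ' = c δ` is positive once `c` exceeds the bound on `L` at `1`. -/
theorem reQuadForm_map_add_smul_one_pos [DecidableEq d] {L : Matrix d d ℂ →ₗ[ℂ] Matrix d d ℂ}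
    {A : Matrix d d ℂ} {x : d → ℂ} {δ : ℝ} (hL : ‖L 1‖ ≤ K * ‖(1 : Matrix d d ℂ)‖)
    (hpos : PositiveMinimumPrinciple L) (hδ : 0 < δ) (hB : (A + δ • 1).PosSemidef) (hx : x ≠ 0) (hBx : (A + δ • 1) *ᵥ x = 0) :
    0 < reQuadForm x (L A + ((Fintype.card d * (K * ‖(1 : Matrix d d ℂ)‖) + 1) * δ) • 1) := by
  have hr : 0 < reQuadForm x 1 := PosDef.one.re_dotProduct_pos hx
  have hL₁ : reQuadForm x (L 1) ≤ Fintype.card d * (K * ‖(1 : Matrix d d ℂ)‖) * reQuadForm x 1 :=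
    (le_abs_self _).trans <| (abs_reQuadForm_le x _).trans <| by gcongr
  rw [← add_sub_cancel_right A (δ • 1), map_sub, LinearMap.map_smul_of_tower, map_add, map_sub,
    map_smul, map_smul, smul_eq_mul, smul_eq_mul]
  linarith [hpos _ hB x hBx, mul_le_mul_of_nonneg_left hL₁ hδ.le, mul_pos hδ hr]

theorem exists_reQuadForm_pos_of_hasDerivWithinAt [DecidableEq d]
    (hA : ∀ τ ∈ Icc s t, HasDerivWithinAt A (L τ (A τ)) (Icc s t) τ)
    (hL : ∀ τ ∈ Icc s t, ∀ B, ‖L τ B‖ ≤ K * ‖B‖) (hherm : ∀ τ ∈ Icc s t, (A τ).IsHermitian)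
    (hpos : ∀ τ ∈ Icc s t, PositiveMinimumPrinciple (L τ))
    (hs : (A s).PosSemidef) :
    ∃ c : ℝ, ∀ ε > 0, ∀ τ ∈ Icc s t, ∀ x ∈ Metric.sphere (0 : d → ℂ) 1,
      0 < reQuadForm x (A τ + (ε * Real.exp (c * (τ - s))) • 1) := by
  refine ⟨Fintype.card d * (K * ‖(1 : Matrix d d ℂ)‖) + 1, fun ε hε => ?_⟩
  set c := Fintype.card d * (K * ‖(1 : Matrix d d ℂ)‖) + 1
  set δ : ℝ → ℝ := fun τ => ε * Real.exp (c * (τ - s))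
  set P : ℝ → Matrix d d ℂ := fun τ => A τ + δ τ • 1
  have hP : ∀ τ ∈ Icc s t, HasDerivWithinAt P (L τ (A τ) + (c * δ τ) • 1) (Icc s t) τ := by
    intro τ hτ
    have hδ : HasDerivAt δ (c * δ τ) τ := by
      refine ((((hasDerivAt_id τ).sub_const s).const_mul c).exp.const_mul ε).congr_deriv ?_
      simp only [δ, id]; ring
    exact (hA τ hτ).add (hδ.hasDerivWithinAt.smul_const 1)
  have hPs : (P s).PosDef := by
    simpa [P, δ] using PosDef.posSemidef_add hs (PosDef.one.smul hε)
  have hPcont : ContinuousOn P (Icc s t) := fun τ hτ => (hP τ hτ).continuousWithinAt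
  have hF : ContinuousOn (fun p : ℝ × (d → ℂ) => reQuadForm p.2 (P p.1))
      (Icc s t ×ˢ Metric.sphere (0 : d → ℂ) 1) :=
    continuous_reQuadForm.comp_continuousOn (f := fun p : ℝ × (d → ℂ) => (P p.1, p.2))
      ((hPcont.comp continuousOn_fst fun p hp => hp.1).prodMk continuousOn_snd)
  by_contra! hneg
  obtain ⟨τ₀, hτ₀, x₀, hx₀, hzero, hnonneg⟩ :=
    exists_first_zero_of_continuousOn (F := fun τ x => reQuadForm x (P τ))
      (isCompact_sphere 0 1) hF
      (fun x hx => hPs.re_dotProduct_pos (ne_zero_of_mem_unit_sphere ⟨x, hx⟩)) hneg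
  have hτ₀' : τ₀ ∈ Icc s t := Ioc_subset_Icc_self hτ₀
  have hB : (P τ₀).PosSemidef := .of_reQuadForm_nonneg_of_mem_sphere
    ((hherm τ₀ hτ₀').add (isHermitian_one.smul (.all _)))
    (hnonneg τ₀ (right_mem_Icc.2 hτ₀.1.le))
  have hBx : P τ₀ *ᵥ x₀ = 0 := hB.dotProduct_mulVec_zero_iff x₀ |>.1 <| by
    rw [← hB.isHermitian.ofReal_reQuadForm, hzero, Complex.ofReal_zero]
  have hslope : reQuadForm x₀ (L τ₀ (A τ₀) + (c * δ τ₀) • 1) ≤ 0 :=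
    IsMinOn.hasDerivWithinAt_Icc_nonpos hτ₀.1
      (fun σ hσ => by simpa [hzero] using hnonneg σ hσ x₀ hx₀)
      (((reQuadForm x₀).hasFDerivAt.comp_hasDerivWithinAt τ₀ (hP τ₀ hτ₀')).mono
        (Icc_subset_Icc_right hτ₀.2))
  exact hslope.not_gt <| reQuadForm_map_add_smul_one_pos (hL τ₀ hτ₀' 1) (hpos τ₀ hτ₀')
    (by positivity) hB (ne_zero_of_mem_unit_sphere ⟨x₀, hx₀⟩) hBx

theorem Matrix.PosSemidef.of_hasDerivWithinAt [DecidableEq d] (hst : s ≤ t)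
    (hA : ∀ τ ∈ Icc s t, HasDerivWithinAt A (L τ (A τ)) (Icc s t) τ)
    (hL : ∀ τ ∈ Icc s t, ∀ B, ‖L τ B‖ ≤ K * ‖B‖)
    (hstar : ∀ τ ∈ Icc s t, ∀ B, L τ Bᴴ = (L τ B)ᴴ)
    (hpos : ∀ τ ∈ Icc s t, PositiveMinimumPrinciple (L τ))
    (hs : (A s).PosSemidef) : (A t).PosSemidef := by
  have hherm := isHermitian_of_hasDerivWithinAt hA hL hstar hs.isHermitian
  obtain ⟨c, hc⟩ := exists_reQuadForm_pos_of_hasDerivWithinAt hA hL hherm hpos hs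
  have ht : t ∈ Icc s t := right_mem_Icc.2 hst
  refine .of_reQuadForm_nonneg_of_mem_sphere (hherm t ht) fun x hx => ?_
  have hr : 0 < Real.exp (c * (t - s)) * reQuadForm x 1 :=
    mul_pos (Real.exp_pos _) (PosDef.one.re_dotProduct_pos (ne_zero_of_mem_unit_sphere ⟨x, hx⟩))
  refine le_of_forall_pos_lt_add fun η hη => ?_
  have := hc (η / (Real.exp (c * (t - s)) * reQuadForm x 1)) (by positivity) t ht x hx
  rw [map_add, map_smul, smul_eq_mul, mul_assoc, div_mul_cancel₀ η hr.ne'] at this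
  linarith

end LinearMatrixODE

section GKSL

variable {d : Type*} [Fintype d] [DecidableEq d]

noncomputable def gkslMap (Φ : Matrix d d ℂ →ₗ[ℂ] Matrix d d ℂ) (C : Matrix d d ℂ) :
    Matrix d d ℂ →ₗ[ℂ] Matrix d d ℂ :=
  Φ - (LinearMap.mulLeft ℂ C + LinearMap.mulRight ℂ Cᴴ)

theorem gkslMap_apply (Φ : Matrix d d ℂ →ₗ[ℂ] Matrix d d ℂ) (C B : Matrix d d ℂ) :
    gkslMap Φ C B = Φ B - (C * B + B * Cᴴ) := rfl

theorem gkslMap_eq_of_forall_eq {L Ψ : Matrix d d ℂ →ₗ[ℂ] Matrix d d ℂ}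
    {G H : Matrix d d ℂ} (hG : G.IsHermitian) (hH : H.IsHermitian)
    (hL : ∀ ρ, L ρ = Ψ ρ - (G * ρ + ρ * G) - Complex.I • (H * ρ - ρ * H)) :
    L = gkslMap Ψ (G + Complex.I • H) := by
  ext1 ρ
  rw [hL, gkslMap_apply, conjTranspose_add, conjTranspose_smul, hG.eq, hH.eq, Complex.star_def,
    Complex.conj_I]
  simp only [Matrix.add_mul, Matrix.mul_add, Matrix.smul_mul, Matrix.mul_smul, neg_smul,
    Matrix.mul_neg, smul_sub]
  abel

theorem gkslMap_conjTranspose {Φ : Matrix d d ℂ →ₗ[ℂ] Matrix d d ℂ}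
    (hΦ : ∀ B, B.PosSemidef → (Φ B).PosSemidef) (C B : Matrix d d ℂ) :
    gkslMap Φ C Bᴴ = (gkslMap Φ C B)ᴴ := by
  simp only [gkslMap_apply, map_conjTranspose_of_posSemidef hΦ, conjTranspose_sub,
    conjTranspose_add, conjTranspose_mul, conjTranspose_conjTranspose, add_comm]

theorem positiveMinimumPrinciple_gkslMap {Φ : Matrix d d ℂ →ₗ[ℂ] Matrix d d ℂ}
    (hΦ : ∀ B, B.PosSemidef → (Φ B).PosSemidef) (C : Matrix d d ℂ) :
    PositiveMinimumPrinciple (gkslMap Φ C) := by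
  intro B hB x hx
  have hxB : star x ᵥ* B = 0 := by rw [← hB.isHermitian.eq, ← star_mulVec, hx, star_zero]
  have hCB : star x ⬝ᵥ (C * B) *ᵥ x = 0 := by
    rw [← mulVec_mulVec, hx, mulVec_zero, dotProduct_zero]
  have hBC : star x ⬝ᵥ (B * Cᴴ) *ᵥ x = 0 := by
    rw [← mulVec_mulVec, dotProduct_mulVec, hxB, zero_dotProduct]
  rw [gkslMap_apply, reQuadForm_apply, sub_mulVec, add_mulVec, dotProduct_sub, dotProduct_add,
    hCB, hBC, add_zero, sub_zero]
  exact (hΦ B hB).re_dotProduct_nonneg x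

end GKSL

section TensorId

variable {n m : ℕ}

theorem tensorId_add (Λ₁ Λ₂ : Matrix (Fin n) (Fin n) ℂ →ₗ[ℂ] Matrix (Fin m) (Fin m) ℂ) (N : ℕ)
    (M : Matrix (Fin n × Fin N) (Fin n × Fin N) ℂ) :
    tensorId (Λ₁ + Λ₂) N M = tensorId Λ₁ N M + tensorId Λ₂ N M := rfl

theorem tensorId_sub (Λ₁ Λ₂ : Matrix (Fin n) (Fin n) ℂ →ₗ[ℂ] Matrix (Fin m) (Fin m) ℂ) (N : ℕ)
    (M : Matrix (Fin n × Fin N) (Fin n × Fin N) ℂ) :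
    tensorId (Λ₁ - Λ₂) N M = tensorId Λ₁ N M - tensorId Λ₂ N M := rfl

theorem tensorId_mulLeft (C : Matrix (Fin n) (Fin n) ℂ) (N : ℕ)
    (M : Matrix (Fin n × Fin N) (Fin n × Fin N) ℂ) :
    tensorId (LinearMap.mulLeft ℂ C) N M = (C ⊗ₖ (1 : Matrix (Fin N) (Fin N) ℂ)) * M := by
  ext ⟨i, a⟩ ⟨j, b⟩
  simp [tensorId, mul_apply, Fintype.sum_prod_type, one_apply]

theorem tensorId_mulRight (C : Matrix (Fin n) (Fin n) ℂ) (N : ℕ)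
    (M : Matrix (Fin n × Fin N) (Fin n × Fin N) ℂ) :
    tensorId (LinearMap.mulRight ℂ C) N M = M * (C ⊗ₖ (1 : Matrix (Fin N) (Fin N) ℂ)) := by
  ext ⟨i, a⟩ ⟨j, b⟩
  simp [tensorId, mul_apply, Fintype.sum_prod_type, one_apply]

noncomputable def tensorIdLinearMap (Λ : Matrix (Fin n) (Fin n) ℂ →ₗ[ℂ] Matrix (Fin m) (Fin m) ℂ)
    (N : ℕ) :
    Matrix (Fin n × Fin N) (Fin n × Fin N) ℂ →ₗ[ℂ] Matrix (Fin m × Fin N) (Fin m × Fin N) ℂ where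
  toFun := tensorId Λ N
  map_add' M M' := by
    ext p q
    exact congrFun₂ (map_add Λ (of fun i j => M (i, p.2) (j, q.2))
      (of fun i j => M' (i, p.2) (j, q.2))) p.1 q.1
  map_smul' c M := by
    ext p q
    exact congrFun₂ (map_smul Λ c (of fun i j => M (i, p.2) (j, q.2))) p.1 q.1

theorem tensorIdLinearMap_apply (Λ : Matrix (Fin n) (Fin n) ℂ →ₗ[ℂ] Matrix (Fin m) (Fin m) ℂ)
    (N : ℕ) (M : Matrix (Fin n × Fin N) (Fin n × Fin N) ℂ) :
    tensorIdLinearMap Λ N M = tensorId Λ N M := rfl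

theorem tensorIdLinearMap_gkslMap (Φ : Matrix (Fin n) (Fin n) ℂ →ₗ[ℂ] Matrix (Fin n) (Fin n) ℂ)
    (C : Matrix (Fin n) (Fin n) ℂ) (N : ℕ) :
    tensorIdLinearMap (gkslMap Φ C) N = gkslMap (tensorIdLinearMap Φ N) (C ⊗ₖ 1) := by
  ext1 M
  rw [gkslMap_apply, conjTranspose_kronecker, conjTranspose_one, tensorIdLinearMap_apply,
    tensorIdLinearMap_apply, gkslMap, tensorId_sub, tensorId_add, tensorId_mulLeft,
    tensorId_mulRight]

theorem tensorIdLinearMap_eq_gkslMap {L Ψ : Matrix (Fin n) (Fin n) ℂ →ₗ[ℂ] Matrix (Fin n) (Fin n) ℂ}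
    {G H : Matrix (Fin n) (Fin n) ℂ} (hG : G.IsHermitian) (hH : H.IsHermitian)
    (hL : ∀ ρ, L ρ = Ψ ρ - (G * ρ + ρ * G) - Complex.I • (H * ρ - ρ * H)) (N : ℕ) :
    tensorIdLinearMap L N = gkslMap (tensorIdLinearMap Ψ N) ((G + Complex.I • H) ⊗ₖ 1) := by
  rw [gkslMap_eq_of_forall_eq hG hH hL, tensorIdLinearMap_gkslMap]

end TensorId

section OperatorNorm

/-- Instance search does not reach the operator norm on these spaces through the (local)
entrywise sup norm on matrices, so it is supplied by hand. -/
noncomputable abbrev matrixCLMNormedAddCommGroup (n m : ℕ) :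
    NormedAddCommGroup (Matrix (Fin n) (Fin n) ℂ →L[ℂ] Matrix (Fin m) (Fin m) ℂ) :=
  ContinuousLinearMap.toNormedAddCommGroup

noncomputable abbrev matrixCLMNormedSpace (n m : ℕ) :
    @NormedSpace ℝ (Matrix (Fin n) (Fin n) ℂ →L[ℂ] Matrix (Fin m) (Fin m) ℂ) _
      (matrixCLMNormedAddCommGroup n m).toSeminormedAddCommGroup :=
  ContinuousLinearMap.toNormedSpace

attribute [local instance] matrixCLMNormedAddCommGroup matrixCLMNormedSpace

variable {n m : ℕ}

theorem norm_tensorId_le (Λ : Matrix (Fin n) (Fin n) ℂ →L[ℂ] Matrix (Fin m) (Fin m) ℂ) (N : ℕ)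
    (M : Matrix (Fin n × Fin N) (Fin n × Fin N) ℂ) :
    ‖tensorId Λ.toLinearMap N M‖ ≤ ‖Λ‖ * ‖M‖ := by
  refine (norm_le_iff (by positivity)).2 fun p q =>
    (norm_entry_le_entrywise_sup_norm (Λ _)).trans <| (Λ.le_opNorm _).trans ?_
  exact mul_le_mul_of_nonneg_left ((norm_le_iff (norm_nonneg _)).2 fun i j =>
    norm_entry_le_entrywise_sup_norm M) (norm_nonneg _)

theorem exists_norm_tensorId_le {Λ : ℝ → Matrix (Fin n) (Fin n) ℂ →L[ℂ] Matrix (Fin m) (Fin m) ℂ}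
    {S : Set ℝ} (hS : IsCompact S) (hΛ : ContinuousOn Λ S) :
    ∃ K, ∀ τ ∈ S, ∀ N (M : Matrix (Fin n × Fin N) (Fin n × Fin N) ℂ),
      ‖tensorId (Λ τ).toLinearMap N M‖ ≤ K * ‖M‖ := by
  obtain ⟨K, hK⟩ := hS.exists_bound_of_continuousOn hΛ
  exact ⟨K, fun τ hτ N M => (norm_tensorId_le _ N M).trans (by gcongr; exact hK τ hτ)⟩

theorem HasDerivWithinAt.tensorId
    {Λ : ℝ → Matrix (Fin n) (Fin n) ℂ →L[ℂ] Matrix (Fin n) (Fin n) ℂ}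
    {Λ' : Matrix (Fin n) (Fin n) ℂ →L[ℂ] Matrix (Fin n) (Fin n) ℂ} {S : Set ℝ} {τ : ℝ}
    (h : HasDerivWithinAt Λ Λ' S τ) (N : ℕ) (M : Matrix (Fin n × Fin N) (Fin n × Fin N) ℂ) :
    HasDerivWithinAt (fun σ => _root_.tensorId (Λ σ).toLinearMap N M)
      (_root_.tensorId Λ'.toLinearMap N M) S τ := by
  let T : (Matrix (Fin n) (Fin n) ℂ →L[ℂ] Matrix (Fin n) (Fin n) ℂ) →ₗ[ℝ]
      Matrix (Fin n × Fin N) (Fin n × Fin N) ℂ :=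
    { toFun := fun Φ => _root_.tensorId Φ.toLinearMap N M
      map_add' := fun _ _ => rfl
      map_smul' := fun _ _ => rfl }
  exact (LinearMap.toContinuousLinearMap T).hasFDerivAt.comp_hasDerivWithinAt τ h

end OperatorNorm

theorem time_dependent_gksl_sufficiency_general {n : ℕ}
    (α ω : EReal)
    (ℒ : ℝ → (Matrix (Fin n) (Fin n) ℂ →L[ℂ] Matrix (Fin n) (Fin n) ℂ))
    (hcont : ContinuousOn ℒ {t : ℝ | α < (t : EReal) ∧ (t : EReal) < ω})
    (hGKSL : ∀ t : ℝ, α < (t : EReal) → (t : EReal) < ω →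
      ∃ (Ψ : Matrix (Fin n) (Fin n) ℂ →ₗ[ℂ] Matrix (Fin n) (Fin n) ℂ)
        (G H : Matrix (Fin n) (Fin n) ℂ),
        CP Ψ ∧ G.IsHermitian ∧ H.IsHermitian ∧
        ∀ ρ : Matrix (Fin n) (Fin n) ℂ,
          ℒ t ρ = Ψ ρ - (G * ρ + ρ * G) - Complex.I • (H * ρ - ρ * H))
    (Λ : ℝ → ℝ → (Matrix (Fin n) (Fin n) ℂ →L[ℂ] Matrix (Fin n) (Fin n) ℂ))
    (hid : ∀ s : ℝ, α < (s : EReal) → (s : EReal) < ω → Λ s s = 1)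
    (hderiv : ∀ s t : ℝ, α < (s : EReal) → s ≤ t → (t : EReal) < ω →
      HasDerivWithinAt (fun τ : ℝ => Λ τ s) ((ℒ t).comp (Λ t s))
        {τ : ℝ | s ≤ τ ∧ (τ : EReal) < ω} t) :
    ∀ s t : ℝ, α < (s : EReal) → s ≤ t → (t : EReal) < ω →
      CP (Λ t s).toLinearMap := by
  intro s t hαs hst htω N hN M hM
  have hmem : ∀ τ ∈ Icc s t, α < (τ : EReal) ∧ (τ : EReal) < ω := fun τ hτ =>
    ⟨hαs.trans_le (EReal.coe_le_coe_iff.2 hτ.1), (EReal.coe_le_coe_iff.2 hτ.2).trans_lt htω⟩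
  have hgen : ∀ τ ∈ Icc s t, ∃ (Φ : Matrix (Fin n × Fin N) (Fin n × Fin N) ℂ →ₗ[ℂ] _) (C : _),
      (∀ B, B.PosSemidef → (Φ B).PosSemidef) ∧
        tensorIdLinearMap (ℒ τ).toLinearMap N = gkslMap Φ C := fun τ hτ => by
    obtain ⟨Ψ, G, H, hΨ, hG, hH, hform⟩ := hGKSL τ (hmem τ hτ).1 (hmem τ hτ).2
    exact ⟨tensorIdLinearMap Ψ N, _, hΨ N hN, tensorIdLinearMap_eq_gkslMap hG hH hform N⟩
  obtain ⟨K, hK⟩ := exists_norm_tensorId_le isCompact_Icc (hcont.mono fun τ hτ => hmem τ hτ)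
  have hsub : Icc s t ⊆ {τ : ℝ | s ≤ τ ∧ (τ : EReal) < ω} := fun σ hσ => ⟨hσ.1, (hmem σ hσ).2⟩
  refine PosSemidef.of_hasDerivWithinAt (L := fun τ => tensorIdLinearMap (ℒ τ).toLinearMap N)
    (A := fun τ => tensorId (Λ τ s).toLinearMap N M) hst (fun τ hτ => ?_)
    (fun τ hτ B => hK τ hτ N B) (fun τ hτ => ?_) (fun τ hτ => ?_) ?_
  · exact ((hderiv s τ hαs hτ.1 (hmem τ hτ).2).tensorId N M).mono hsub
  · obtain ⟨Φ, C, hΦ, h⟩ := hgen τ hτ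
    exact h ▸ gkslMap_conjTranspose hΦ C
  · obtain ⟨Φ, C, hΦ, h⟩ := hgen τ hτ
    exact h ▸ positiveMinimumPrinciple_gkslMap hΦ C
  · rw [hid s hαs (hmem s (left_mem_Icc.2 hst)).2]
    exact hM

/-- time-dependent GKSL sufficiency, finite dimensions: if
`ℒ : (α,ω) → End(M_n(ℂ))` is continuous and each `ℒ(t)` has a GKSL presentation
`L(Ψ_t, G_t, H_t)` with `Ψ_t` completely positive and `G_t`, `H_t` Hermitian, then the
solution `Λ(t,s)` of `∂Λ(t,s)/∂t = ℒ(t) ∘ Λ(t,s)`, `Λ(s,s) = id`, is completely positive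
for all `α < s ≤ t < ω`. -/
theorem time_dependent_gksl_sufficiency {n : ℕ}
    (α ω : EReal) (hαω : α < ω)
    (ℒ : ℝ → (Matrix (Fin n) (Fin n) ℂ →L[ℂ] Matrix (Fin n) (Fin n) ℂ))
    (hcont : ContinuousOn ℒ {t : ℝ | α < (t : EReal) ∧ (t : EReal) < ω})
    (hGKSL : ∀ t : ℝ, α < (t : EReal) → (t : EReal) < ω →
      ∃ (Ψ : Matrix (Fin n) (Fin n) ℂ →ₗ[ℂ] Matrix (Fin n) (Fin n) ℂ)
        (G H : Matrix (Fin n) (Fin n) ℂ),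
        CP Ψ ∧ G.IsHermitian ∧ H.IsHermitian ∧
        ∀ ρ : Matrix (Fin n) (Fin n) ℂ,
          ℒ t ρ = Ψ ρ - (G * ρ + ρ * G) - Complex.I • (H * ρ - ρ * H))
    (Λ : ℝ → ℝ → (Matrix (Fin n) (Fin n) ℂ →L[ℂ] Matrix (Fin n) (Fin n) ℂ))
    (hid : ∀ s : ℝ, α < (s : EReal) → (s : EReal) < ω → Λ s s = 1)
    (hderiv : ∀ s t : ℝ, α < (s : EReal) → s ≤ t → (t : EReal) < ω →
      HasDerivWithinAt (fun τ : ℝ => Λ τ s) ((ℒ t).comp (Λ t s))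
        {τ : ℝ | s ≤ τ ∧ (τ : EReal) < ω} t) :
    ∀ s t : ℝ, α < (s : EReal) → s ≤ t → (t : EReal) < ω →
      CP (Λ t s).toLinearMap :=
  time_dependent_gksl_sufficiency_general α ω ℒ hcont hGKSL Λ hid hderiv
end
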